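/- arXiv:1402.6459 — 4 statements merged into one kernel-verified Lean document; each statement's English description precedes it below -/
import Mathlib

section
/- For any MCCS term P and any pairing c of P, if P reduces to Q under the execution step labelled by c, then Q is unique up to structural congruence; that is, for a fixed P and partial involution c, there is at most one structural congruence class Q with P →_c Q. -/
/-! Multiplicative CCS (MCCS): processes with located action prefixes.
`act true a ℓ P` is the positive prefix `a^ℓ.P`, `act false a ℓ P` is `ā^ℓ.P`. -/
inductive Proc : Type where
  | one : Proc
  | par : Proc → Proc → Proc
  | act : Bool → ℕ → ℕ → Proc → Proc

namespace Proc

/-- The list of locations occurring in a term. -/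
def locList : Proc → List ℕ
  | one => []
  | par P Q => P.locList ++ Q.locList
  | act _ _ ℓ P => ℓ :: P.locList

/-- The set of locations occurring in a term. -/
def locs (P : Proc) : Finset ℕ := P.locList.toFinset

/-- Well-formed: each location occurs at most once. -/
def WF (P : Proc) : Prop := P.locList.Nodup

/-- The subject (channel name) of a location. -/
def subj : Proc → ℕ → Option ℕ
  | one, _ => none
  | par P Q, ℓ => (P.subj ℓ).orElse (fun _ => Q.subj ℓ)
  | act _ a m P, ℓ => if ℓ = m then some a else P.subj ℓ

/-- The polarity of a location (`true` = positive). -/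
def pol : Proc → ℕ → Option Bool
  | one, _ => none
  | par P Q, ℓ => (P.pol ℓ).orElse (fun _ => Q.pol ℓ)
  | act b _ m P, ℓ => if ℓ = m then some b else P.pol ℓ

/-- The (strict) action / prefixing order of a term: `plt P ℓ m` iff the
prefix at `ℓ` guards the one at `m`. -/
inductive plt : Proc → ℕ → ℕ → Prop where
  | parL {P Q ℓ m} : plt P ℓ m → plt (par P Q) ℓ m
  | parR {P Q ℓ m} : plt Q ℓ m → plt (par P Q) ℓ m
  | here {b a ℓ m P} : m ∈ P.locs → plt (act b a ℓ P) ℓ m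
  | under {b a n P ℓ m} : plt P ℓ m → plt (act b a n P) ℓ m

/-- Number of action prefixes. -/
def size : Proc → ℕ
  | one => 0
  | par P Q => P.size + Q.size
  | act _ _ _ P => P.size + 1

end Proc

/-- Structural congruence: smallest congruence making `par` commutative,
associative, with `one` as neutral element. -/
inductive SC : Proc → Proc → Prop where
  | refl (P) : SC P P
  | symm {P Q} : SC P Q → SC Q P
  | trans {P Q R} : SC P Q → SC Q R → SC P R
  | parComm (P Q) : SC (.par P Q) (.par Q P)
  | parAssoc (P Q R) : SC (.par (.par P Q) R) (.par P (.par Q R))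
  | parUnit (P) : SC (.par .one P) P
  | parCong {P P' Q Q'} : SC P P' → SC Q Q' → SC (.par P Q) (.par P' Q')
  | actCong (b a ℓ) {P Q} : SC P Q → SC (.act b a ℓ P) (.act b a ℓ Q)

/-- One execution step, labelled by the pair (positive location, negative location)
of the two synchronised prefixes; defined on structural congruence classes. -/
def Step (P : Proc) (p : ℕ × ℕ) (Q : Proc) : Prop :=
  ∃ a P₁ Q₁ R,
    SC P (.par (.act true a p.1 P₁) (.par (.act false a p.2 Q₁) R)) ∧
    SC Q (.par P₁ (.par Q₁ R))

/-- Execution sequences, annotated by the list of synchronisation pairs. -/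
inductive ExecL : Proc → List (ℕ × ℕ) → Proc → Prop where
  | refl {P Q} : SC P Q → ExecL P [] Q
  | step {P p Q l R} : Step P p Q → ExecL Q l R → ExecL P (p :: l) R

/-- The domain of a pairing (set of paired locations). -/
def pdom (c : Finset (ℕ × ℕ)) : Finset ℕ := c.image Prod.fst ∪ c.image Prod.snd

/-- A pairing of `P`: a partial involution on locations of `P`,
represented as a set of (positive location, negative location) pairs with
matching subjects, opposite polarities and pairwise disjoint components. -/
def IsPairing (P : Proc) (c : Finset (ℕ × ℕ)) : Prop :=
  (∀ p ∈ c, P.pol p.1 = some true ∧ P.pol p.2 = some false ∧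
      P.subj p.1 = P.subj p.2 ∧ (P.subj p.1).isSome) ∧
  (∀ p ∈ c, ∀ q ∈ c, p ≠ q → p.1 ≠ q.1 ∧ p.2 ≠ q.2 ∧ p.1 ≠ q.2)

/-- The equivalence relation `∼_c` generated by a pairing `c`. -/
def peqv (c : Finset (ℕ × ℕ)) : ℕ → ℕ → Prop :=
  Relation.EqvGen (fun x y => (x, y) ∈ c ∨ (y, x) ∈ c)

/-- The relation `∼_c ∘ <_P ∘ ∼_c`. -/
def consRel (P : Proc) (c : Finset (ℕ × ℕ)) (x y : ℕ) : Prop :=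
  ∃ u v, peqv c x u ∧ P.plt u v ∧ peqv c v y

/-- A relation is acyclic if it has no (transitive) cycle. -/
def Acyclic (r : ℕ → ℕ → Prop) : Prop := ∀ x, ¬ Relation.TransGen r x x

/-- The domain of `c` is downward closed for the action order of `P`. -/
def DownClosed (P : Proc) (c : Finset (ℕ × ℕ)) : Prop :=
  ∀ ℓ m, P.plt ℓ m → m ∈ pdom c → ℓ ∈ pdom c

/-- Consistency of a pairing. -/
def Consistent (P : Proc) (c : Finset (ℕ × ℕ)) : Prop :=
  DownClosed P c ∧ Acyclic (consRel P c)

/-! MLL with actions (MLLa). -/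

inductive Form : Type where
  | pv : ℕ → Form
  | nv : ℕ → Form
  | tens : Form → Form → Form
  | parr : Form → Form → Form
  | modp : ℕ → Form → Form
  | modn : ℕ → Form → Form

namespace Form

def dual : Form → Form
  | pv α => nv α
  | nv α => pv α
  | tens A B => parr A.dual B.dual
  | parr A B => tens A.dual B.dual
  | modp a A => modn a A.dual
  | modn a A => modp a A.dual

/-- Instantiation of propositional variables. -/
def subst (σ : ℕ → Form) : Form → Form
  | pv α => σ α
  | nv α => (σ α).dual
  | tens A B => tens (A.subst σ) (B.subst σ)
  | parr A B => parr (A.subst σ) (B.subst σ)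
  | modp a A => modp a (A.subst σ)
  | modn a A => modn a (A.subst σ)

end Form

/-- Sequent-calculus provability for MLLa.  `Prov true` allows the modality
rules; `Prov false` is pure MLL (axiom, cut, ⊗, ⅋, exchange only). -/
inductive Prov : Bool → List Form → Prop where
  | ax (b A) : Prov b [Form.dual A, A]
  | cut {b A Γ Δ} : Prov b (A :: Γ) → Prov b (A.dual :: Δ) → Prov b (Γ ++ Δ)
  | tens {b A B Γ Δ} : Prov b (A :: Γ) → Prov b (B :: Δ) →
      Prov b (Form.tens A B :: (Γ ++ Δ))
  | parr {b A B Γ} : Prov b (A :: B :: Γ) → Prov b (Form.parr A B :: Γ)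
  | exch {b Γ Δ} : Prov b Γ → Γ.Perm Δ → Prov b Δ
  | modp {A Γ} (a) : Prov true (A :: Γ) → Prov true (Form.modp a A :: Γ)
  | modn {A Γ} (a) : Prov true (A :: Γ) → Prov true (Form.modn a A :: Γ)

/-- Synchronous type assignment (with a fresh-variable counter):
`tSA P n = (⌈P⌉ₛ, n')` using variables `n, …, n'-1`, each exactly once
positively and once negatively. -/
def tSA : Proc → ℕ → Form × ℕ
  | .one, n => (.parr (.nv n) (.pv n), n + 1)
  | .par P Q, n =>
      let r := tSA P n
      let s := tSA Q r.2
      (.tens r.1 s.1, s.2)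
  | .act true a _ P, n =>
      let r := tSA P (n + 1)
      (.modp a (.parr (.nv n) (.tens r.1 (.pv n))), r.2)
  | .act false a _ P, n =>
      let r := tSA P (n + 1)
      (.parr (.modn a (.tens r.1 (.nv n))) (.pv n), r.2)

/-- Asynchronous type assignment. -/
def tAA : Proc → ℕ → Form × ℕ
  | .one, n => (.parr (.nv n) (.pv n), n + 1)
  | .par P Q, n =>
      let r := tAA P n
      let s := tAA Q r.2
      (.tens r.1 s.1, s.2)
  | .act true a _ P, n =>
      let r := tAA P (n + 1)
      (.parr (.modp a (.nv n)) (.tens r.1 (.pv n)), r.2)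
  | .act false a _ P, n =>
      let r := tAA P (n + 1)
      (.parr (.tens r.1 (.nv n)) (.modn a (.pv n)), r.2)

def tS (P : Proc) : Form := (tSA P 0).1

def tA (P : Proc) : Form := (tAA P 0).1

/-- `⌈P⌉ₛ ⊸ ⌈Q⌉ₛ` is provable in pure MLL for some instantiation of the
propositional variables of `⌈P⌉ₛ` (the variables of the two translations
are chosen disjoint). -/
def SImp (P Q : Proc) : Prop :=
  ∃ σ : ℕ → Form,
    Prov false [Form.parr (((tSA P 0).1.subst σ)).dual (tSA Q (tSA P 0).2).1]

/-- Asynchronous version: `⌈P⌉ₐ ⊸ ⌈Q⌉ₐ` provable in pure MLL under some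
instantiation of the variables of `⌈P⌉ₐ`. -/
def AImp (P Q : Proc) : Prop :=
  ∃ σ : ℕ → Form,
    Prov false [Form.parr (((tAA P 0).1.subst σ)).dual (tAA Q (tAA P 0).2).1]

/-- Cut-free MLLa proof trees. -/
inductive CF : List Form → Type where
  | ax (A) : CF [Form.dual A, A]
  | tens {A B Γ Δ} : CF (Γ ++ [A]) → CF (B :: Δ) → CF (Γ ++ Form.tens A B :: Δ)
  | parr {A B Γ Δ} : CF (Γ ++ A :: B :: Δ) → CF (Γ ++ Form.parr A B :: Δ)
  | modp {A Γ Δ} (a) : CF (Γ ++ A :: Δ) → CF (Γ ++ Form.modp a A :: Δ)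
  | modn {A Γ Δ} (a) : CF (Γ ++ A :: Δ) → CF (Γ ++ Form.modn a A :: Δ)

/-! Auxiliary development for step uniqueness. -/

deriving instance DecidableEq for Proc

namespace StepUnique

open Proc

/-- Injective encoding of processes into ℕ. -/
def enc : Proc → ℕ
  | .one => 0
  | .par P Q => 3 * Nat.pair (enc P) (enc Q) + 1
  | .act b a ℓ P => 3 * Nat.pair (cond b 1 0) (Nat.pair a (Nat.pair ℓ (enc P))) + 2

lemma enc_inj : ∀ P Q : Proc, enc P = enc Q → P = Q := by
  intro P
  induction P with
  | one => intro Q h; cases Q <;> simp [enc] at h ⊢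
  | par P₁ P₂ ih1 ih2 =>
    intro Q h; cases Q with
    | one => simp [enc] at h
    | par Q₁ Q₂ =>
      simp only [enc] at h
      have h' : Nat.pair (enc P₁) (enc P₂) = Nat.pair (enc Q₁) (enc Q₂) := by omega
      rw [Nat.pair_eq_pair] at h'
      rw [ih1 _ h'.1, ih2 _ h'.2]
    | act b a ℓ Q' => simp only [enc] at h; omega
  | act b a ℓ P' ih =>
    intro Q h; cases Q with
    | one => simp [enc] at h
    | par Q₁ Q₂ => simp only [enc] at h; omega
    | act b' a' ℓ' Q' =>
      simp only [enc] at h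
      have h' : Nat.pair (cond b 1 0) (Nat.pair a (Nat.pair ℓ (enc P'))) =
          Nat.pair (cond b' 1 0) (Nat.pair a' (Nat.pair ℓ' (enc Q'))) := by omega
      rw [Nat.pair_eq_pair, Nat.pair_eq_pair, Nat.pair_eq_pair] at h'
      obtain ⟨hb, ha, hl, he⟩ := h'
      have : b = b' := by cases b <;> cases b' <;> simp_all
      rw [this, ha, hl, ih _ he]

noncomputable instance : LinearOrder Proc :=
  LinearOrder.lift' enc (fun P Q h => enc_inj P Q h)

/-- Canonical sorting of a multiset of processes. -/
noncomputable def sortT (M : Multiset Proc) : List Proc := M.sort (· ≤ ·)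

lemma sortT_perm (L : List Proc) : (sortT ↑L).Perm L := by
  rw [← Multiset.coe_eq_coe]; unfold sortT; rw [Multiset.sort_eq]

def unflatten : List Proc → Proc := List.foldr Proc.par .one

/-- Top-level threads, with bodies recursively normalised. -/
noncomputable def threads : Proc → List Proc
  | .one => []
  | .par P Q => threads P ++ threads Q
  | .act b a ℓ P => [.act b a ℓ (unflatten (sortT ↑(threads P)))]

noncomputable def norm (P : Proc) : Proc := unflatten (sortT ↑(threads P))

lemma threads_act (b a ℓ P) : threads (.act b a ℓ P) = [.act b a ℓ (norm P)] := rfl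

/-- SC preserves the multiset of locations. -/
lemma sc_locList {P Q : Proc} (h : SC P Q) : (↑P.locList : Multiset ℕ) = ↑Q.locList := by
  induction h with
  | refl => rfl
  | symm _ ih => exact ih.symm
  | trans _ _ ih1 ih2 => exact ih1.trans ih2
  | parComm P Q =>
    simp only [Proc.locList]; exact Multiset.coe_eq_coe.mpr List.perm_append_comm
  | parAssoc P Q R => simp [Proc.locList, add_assoc]
  | parUnit P => simp [Proc.locList]
  | parCong _ _ ih1 ih2 => simp only [Proc.locList, ← Multiset.coe_add]; rw [ih1, ih2]
  | actCong b a ℓ _ ih =>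
    simp only [Proc.locList, ← Multiset.cons_coe]; rw [ih]

lemma sc_unflatten_perm {L L' : List Proc} (h : L.Perm L') :
    SC (unflatten L) (unflatten L') := by
  induction h with
  | nil => exact .refl _
  | cons x _ ih => exact .parCong (.refl x) ih
  | swap x y L =>
    exact .trans (.symm (.parAssoc _ _ _))
      (.trans (.parCong (.parComm _ _) (.refl _)) (.parAssoc _ _ _))
  | trans _ _ ih1 ih2 => exact ih1.trans ih2

lemma sc_unflatten_append (L₁ L₂ : List Proc) :
    SC (unflatten (L₁ ++ L₂)) (.par (unflatten L₁) (unflatten L₂)) := by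
  induction L₁ with
  | nil => exact .symm (.parUnit _)
  | cons x L ih =>
    exact .trans (.parCong (.refl x) ih) (.symm (.parAssoc _ _ _))

lemma sc_norm : ∀ P : Proc, SC P (norm P) := by
  intro P
  induction P with
  | one =>
    show SC .one (unflatten (sortT 0))
    rw [show sortT 0 = [] from Multiset.sort_zero _]
    exact .refl _
  | par P Q ih1 ih2 =>
    refine .trans (.parCong ih1 ih2) ?_
    refine .trans (.symm (sc_unflatten_append (sortT ↑(threads P)) (sortT ↑(threads Q)))) ?_
    refine .trans (sc_unflatten_perm (((sortT_perm _).append (sortT_perm _)))) ?_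
    exact .symm (sc_unflatten_perm (by exact sortT_perm _))
  | act b a ℓ P ih =>
    refine .trans (.actCong b a ℓ ih) ?_
    refine .trans ?_ (.symm (sc_unflatten_perm (sortT_perm (threads (.act b a ℓ P)))))
    rw [threads_act]
    exact .symm (.trans (.parComm _ _) (.parUnit _))

lemma sc_of_norm_eq {P Q : Proc} (h : norm P = norm Q) : SC P Q :=
  .trans (sc_norm P) (h ▸ .symm (sc_norm Q))

/-- SC preserves the multiset of normalised threads. -/
lemma sc_threads {P Q : Proc} (h : SC P Q) : (↑(threads P) : Multiset Proc) = ↑(threads Q) := by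
  induction h with
  | refl => rfl
  | symm _ ih => exact ih.symm
  | trans _ _ ih1 ih2 => exact ih1.trans ih2
  | parComm P Q =>
    simp only [threads]; exact Multiset.coe_eq_coe.mpr List.perm_append_comm
  | parAssoc P Q R => simp [threads, add_assoc]
  | parUnit P => simp [threads]
  | parCong _ _ ih1 ih2 => simp only [threads, ← Multiset.coe_add]; rw [ih1, ih2]
  | actCong b a ℓ h ih =>
    rename_i P' Q'
    have hn : norm P' = norm Q' := by unfold norm sortT; rw [ih]
    simp [threads_act, hn]

lemma norm_eq_of_threads_eq {P Q : Proc}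
    (h : (↑(threads P) : Multiset Proc) = ↑(threads Q)) : norm P = norm Q := by
  unfold norm sortT; rw [h]

/-- All locations in a multiset of threads. -/
def mlocs (M : Multiset Proc) : Multiset ℕ := M.bind (fun p => ↑p.locList)

lemma mlocs_threads : ∀ P : Proc, (↑P.locList : Multiset ℕ) = mlocs ↑(threads P) := by
  intro P
  induction P with
  | one => simp [Proc.locList, threads, mlocs]
  | par P Q ih1 ih2 =>
    simp only [Proc.locList, threads, ← Multiset.coe_add, mlocs, Multiset.add_bind] at *
    rw [ih1, ih2]
  | act b a ℓ P ih =>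
    have h1 : (↑(norm P).locList : Multiset ℕ) = ↑P.locList := (sc_locList (sc_norm P)).symm
    simp only [Proc.locList, threads_act, mlocs, ← Multiset.cons_coe, Multiset.cons_bind,
      Multiset.singleton_bind] at *
    rw [h1, ih]
    simp [Proc.locList, ← Multiset.cons_coe]

lemma loc_mem_unique {M : Multiset Proc} (hnd : (mlocs M).Nodup) {x y : Proc} {ℓ : ℕ}
    (hx : x ∈ M) (hy : y ∈ M) (hℓx : ℓ ∈ x.locList) (hℓy : ℓ ∈ y.locList) : x = y := by
  by_contra hne
  obtain ⟨M', rfl⟩ := Multiset.exists_cons_of_mem hx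
  have hy' : y ∈ M' := by
    rcases Multiset.mem_cons.mp hy with h | h
    · exact absurd h.symm hne
    · exact h
  obtain ⟨M'', rfl⟩ := Multiset.exists_cons_of_mem hy'
  have : ¬ (mlocs (x ::ₘ y ::ₘ M'')).Nodup := by
    intro h
    rw [Multiset.nodup_iff_count_le_one] at h
    have := h ℓ
    have h2 : 2 ≤ Multiset.count ℓ (mlocs (x ::ₘ y ::ₘ M'')) := by
      simp only [mlocs, Multiset.cons_bind, Multiset.count_add]
      have c1 : 1 ≤ Multiset.count ℓ (↑x.locList : Multiset ℕ) :=
        Multiset.one_le_count_iff_mem.mpr (by simpa using hℓx)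
      have c2 : 1 ≤ Multiset.count ℓ (↑y.locList : Multiset ℕ) :=
        Multiset.one_le_count_iff_mem.mpr (by simpa using hℓy)
      omega
    omega
  exact this hnd

end StepUnique

namespace StepUnique

lemma threads_par (P Q : Proc) : threads (.par P Q) = threads P ++ threads Q := rfl

end StepUnique

/-- for a fixed well-formed `P` and label `c`, the result of the
execution step `P →_c ·` is unique up to structural congruence. -/
theorem step_unique_up_to_sc (P : Proc) (hWF : P.WF) (c : ℕ × ℕ) (Q R : Proc)
    (hQ : Step P c Q) (hR : Step P c R) : SC Q R := by
  classical
  obtain ⟨a, P₁, Q₁, R₁, hP1, hQ1⟩ := hQ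
  obtain ⟨a', P₂, Q₂, R₂, hP2, hQ2⟩ := hR
  open StepUnique in
  set A₁ : Proc := .act true a c.1 (norm P₁) with hA₁def
  set B₁ : Proc := .act false a c.2 (norm Q₁) with hB₁def
  set A₂ : Proc := .act true a' c.1 (norm P₂) with hA₂def
  set B₂ : Proc := .act false a' c.2 (norm Q₂) with hB₂def
  set W₁ : Proc := .par (.act true a c.1 P₁) (.par (.act false a c.2 Q₁) R₁) with hW₁def
  set W₂ : Proc := .par (.act true a' c.1 P₂) (.par (.act false a' c.2 Q₂) R₂) with hW₂def
  have e1 : StepUnique.threads W₁ = A₁ :: B₁ :: StepUnique.threads R₁ := by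
    rw [hW₁def, threads_par, threads_par, threads_act, threads_act]; rfl
  have e2 : StepUnique.threads W₂ = A₂ :: B₂ :: StepUnique.threads R₂ := by
    rw [hW₂def, threads_par, threads_par, threads_act, threads_act]; rfl
  have hT : (↑(StepUnique.threads W₁) : Multiset Proc) = ↑(StepUnique.threads W₂) :=
    sc_threads (hP1.symm.trans hP2)
  have hnd : (mlocs ↑(StepUnique.threads W₁)).Nodup := by
    rw [← mlocs_threads]
    have h := sc_locList hP1
    rw [← h]
    exact Multiset.coe_nodup.mpr hWF
  have hA1mem : A₁ ∈ (↑(StepUnique.threads W₁) : Multiset Proc) := by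
    rw [e1]; simp
  have hB1mem : B₁ ∈ (↑(StepUnique.threads W₁) : Multiset Proc) := by
    rw [e1]; simp
  have hA2mem : A₂ ∈ (↑(StepUnique.threads W₁) : Multiset Proc) := by
    rw [hT, e2]; simp
  have hB2mem : B₂ ∈ (↑(StepUnique.threads W₁) : Multiset Proc) := by
    rw [hT, e2]; simp
  have hAA : A₁ = A₂ :=
    loc_mem_unique hnd hA1mem hA2mem (ℓ := c.1)
      (by rw [hA₁def]; simp [Proc.locList]) (by rw [hA₂def]; simp [Proc.locList])
  have hBB : B₁ = B₂ :=
    loc_mem_unique hnd hB1mem hB2mem (ℓ := c.2)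
      (by rw [hB₁def]; simp [Proc.locList]) (by rw [hB₂def]; simp [Proc.locList])
  rw [hA₁def, hA₂def, Proc.act.injEq] at hAA
  rw [hB₁def, hB₂def, Proc.act.injEq] at hBB
  obtain ⟨-, ha, -, hP12⟩ := hAA
  obtain ⟨-, -, -, hQ12⟩ := hBB
  have scP : SC P₁ P₂ := sc_of_norm_eq hP12
  have scQ : SC Q₁ Q₂ := sc_of_norm_eq hQ12
  have hT' : (↑(StepUnique.threads R₁) : Multiset Proc) = ↑(StepUnique.threads R₂) := by
    rw [e1, e2] at hT
    simp only [← Multiset.cons_coe] at hT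
    rw [hA₁def, hB₁def, hA₂def, hB₂def, ha, hP12, hQ12] at hT
    rwa [Multiset.cons_inj_right, Multiset.cons_inj_right] at hT
  have scR : SC R₁ R₂ := sc_of_norm_eq (norm_eq_of_threads_eq hT')
  exact hQ1.trans ((SC.parCong scP (SC.parCong scQ scR)).trans hQ2.symm)
end

section
/- A pairing c of an MCCS term P is consistent if and only if there exists a term Q such that P →*_c Q, i.e. some execution of P realizes exactly the pairing c. -/
namespace Proc

lemma mem_locs {P : Proc} {ℓ : ℕ} : ℓ ∈ P.locs ↔ ℓ ∈ P.locList := List.mem_toFinset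

lemma pol_isSome' {P : Proc} {ℓ : ℕ} : (P.pol ℓ).isSome ↔ ℓ ∈ P.locList := by
  induction P with
  | one => simp [pol, locList]
  | par P Q ihP ihQ =>
      simp only [pol, locList, List.mem_append]
      cases h : P.pol ℓ with
      | none =>
          have : ℓ ∉ P.locList := by rw [← ihP]; simp [h]
          simp [Option.orElse, ihQ, this]
      | some b =>
          have : ℓ ∈ P.locList := by rw [← ihP]; simp [h]
          simp [Option.orElse, this]
  | act b a m P ih =>
      by_cases h : ℓ = m <;> simp [pol, locList, h, ih]

lemma pol_isSome {P : Proc} {ℓ : ℕ} : (P.pol ℓ).isSome ↔ ℓ ∈ P.locs :=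
  pol_isSome'.trans mem_locs.symm

lemma subj_isSome' {P : Proc} {ℓ : ℕ} : (P.subj ℓ).isSome ↔ ℓ ∈ P.locList := by
  induction P with
  | one => simp [subj, locList]
  | par P Q ihP ihQ =>
      simp only [subj, locList, List.mem_append]
      cases h : P.subj ℓ with
      | none =>
          have : ℓ ∉ P.locList := by rw [← ihP]; simp [h]
          simp [Option.orElse, ihQ, this]
      | some b =>
          have : ℓ ∈ P.locList := by rw [← ihP]; simp [h]
          simp [Option.orElse, this]
  | act b a m P ih =>
      by_cases h : ℓ = m <;> simp [subj, locList, h, ih]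

lemma subj_isSome {P : Proc} {ℓ : ℕ} : (P.subj ℓ).isSome ↔ ℓ ∈ P.locs :=
  subj_isSome'.trans mem_locs.symm

lemma pol_eq_none {P : Proc} {ℓ : ℕ} (h : ℓ ∉ P.locs) : P.pol ℓ = none :=
  Option.not_isSome_iff_eq_none.1 (fun hs => h (pol_isSome.1 hs))

lemma subj_eq_none {P : Proc} {ℓ : ℕ} (h : ℓ ∉ P.locs) : P.subj ℓ = none :=
  Option.not_isSome_iff_eq_none.1 (fun hs => h (subj_isSome.1 hs))

lemma plt_mem {P : Proc} {ℓ m : ℕ} (h : P.plt ℓ m) : ℓ ∈ P.locs ∧ m ∈ P.locs := by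
  induction h with
  | parL _ ih => simp [locs, locList, mem_locs] at ih ⊢; tauto
  | parR _ ih => simp [locs, locList, mem_locs] at ih ⊢; tauto
  | here hm => simp [locs, locList, mem_locs] at hm ⊢; tauto
  | under _ ih => simp [locs, locList, mem_locs] at ih ⊢; tauto

lemma plt_one {ℓ m : ℕ} : ¬ plt .one ℓ m := by intro h; cases h

lemma plt_par {P Q : Proc} {ℓ m : ℕ} :
    plt (.par P Q) ℓ m ↔ plt P ℓ m ∨ plt Q ℓ m := by
  constructor
  · intro h; cases h with
    | parL h => exact Or.inl h
    | parR h => exact Or.inr h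
  · rintro (h | h); exacts [.parL h, .parR h]

lemma plt_act {b : Bool} {a n : ℕ} {P : Proc} {ℓ m : ℕ} :
    plt (.act b a n P) ℓ m ↔ (ℓ = n ∧ m ∈ P.locs) ∨ plt P ℓ m := by
  constructor
  · intro h; cases h with
    | here h => exact Or.inl ⟨rfl, h⟩
    | under h => exact Or.inr h
  · rintro (⟨rfl, h⟩ | h); exacts [.here h, .under h]

end Proc

lemma locList_perm_of_SC {P Q : Proc} (h : SC P Q) : P.locList.Perm Q.locList := by
  induction h with
  | refl P => exact List.Perm.refl _
  | symm _ ih => exact ih.symm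
  | trans _ _ ih1 ih2 => exact ih1.trans ih2
  | parComm P Q => exact List.perm_append_comm
  | parAssoc P Q R => simp [Proc.locList, List.append_assoc]
  | parUnit P => simp [Proc.locList]
  | parCong _ _ ih1 ih2 => exact ih1.append ih2
  | actCong b a ℓ _ ih => exact ih.cons ℓ

lemma locs_eq_of_SC {P Q : Proc} (h : SC P Q) : P.locs = Q.locs :=
  List.toFinset_eq_of_perm _ _ (locList_perm_of_SC h)

lemma wf_of_SC {P Q : Proc} (h : SC P Q) (hw : P.WF) : Q.WF :=
  (locList_perm_of_SC h).nodup_iff.1 hw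

lemma wf_par_left {P Q : Proc} (h : (Proc.par P Q).WF) : P.WF :=
  (List.nodup_append.1 h).1

lemma wf_par_right {P Q : Proc} (h : (Proc.par P Q).WF) : Q.WF :=
  (List.nodup_append.1 h).2.1

lemma wf_par_disj {P Q : Proc} (h : (Proc.par P Q).WF) :
    ∀ ℓ, ℓ ∈ P.locs → ℓ ∉ Q.locs := by
  intro ℓ h1 h2
  exact (List.nodup_append.1 h).2.2 ℓ (Proc.mem_locs.1 h1) ℓ (Proc.mem_locs.1 h2) rfl

lemma wf_act {b : Bool} {a ℓ : ℕ} {P : Proc} (h : (Proc.act b a ℓ P).WF) : P.WF :=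
  (List.nodup_cons.1 h).2

lemma wf_act_not_mem {b : Bool} {a ℓ : ℕ} {P : Proc} (h : (Proc.act b a ℓ P).WF) :
    ℓ ∉ P.locs := fun hm => (List.nodup_cons.1 h).1 (Proc.mem_locs.1 hm)

lemma pol_eq_of_SC {P Q : Proc} (h : SC P Q) (hw : P.WF) (ℓ : ℕ) :
    P.pol ℓ = Q.pol ℓ := by
  induction h with
  | refl P => rfl
  | symm h ih => exact (ih (wf_of_SC (SC.symm h) hw)).symm
  | trans h1 _ ih1 ih2 => exact (ih1 hw).trans (ih2 (wf_of_SC h1 hw))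
  | parComm P Q =>
      simp only [Proc.pol]
      cases h1 : P.pol ℓ with
      | none => cases h2 : Q.pol ℓ <;> simp [Option.orElse]
      | some b =>
          have h2 : Q.pol ℓ = none :=
            Proc.pol_eq_none (wf_par_disj hw ℓ (Proc.pol_isSome.1 (by simp [h1])))
          simp [Option.orElse, h2]
  | parAssoc P Q R =>
      simp only [Proc.pol]
      cases h1 : P.pol ℓ <;> simp [Option.orElse]
  | parUnit P => simp [Proc.pol, Option.orElse]
  | parCong h1 h2 ih1 ih2 =>
      simp only [Proc.pol, ih1 (wf_par_left hw), ih2 (wf_par_right hw)]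
  | actCong b a n h ih =>
      simp only [Proc.pol]
      by_cases hn : ℓ = n <;> simp [hn, ih (wf_act hw)]

lemma subj_eq_of_SC {P Q : Proc} (h : SC P Q) (hw : P.WF) (ℓ : ℕ) :
    P.subj ℓ = Q.subj ℓ := by
  induction h with
  | refl P => rfl
  | symm h ih => exact (ih (wf_of_SC (SC.symm h) hw)).symm
  | trans h1 _ ih1 ih2 => exact (ih1 hw).trans (ih2 (wf_of_SC h1 hw))
  | parComm P Q =>
      simp only [Proc.subj]
      cases h1 : P.subj ℓ with
      | none => cases h2 : Q.subj ℓ <;> simp [Option.orElse]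
      | some b =>
          have h2 : Q.subj ℓ = none :=
            Proc.subj_eq_none (wf_par_disj hw ℓ (Proc.subj_isSome.1 (by simp [h1])))
          simp [Option.orElse, h2]
  | parAssoc P Q R =>
      simp only [Proc.subj]
      cases h1 : P.subj ℓ <;> simp [Option.orElse]
  | parUnit P => simp [Proc.subj, Option.orElse]
  | parCong h1 h2 ih1 ih2 =>
      simp only [Proc.subj, ih1 (wf_par_left hw), ih2 (wf_par_right hw)]
  | actCong b a n h ih =>
      simp only [Proc.subj]
      by_cases hn : ℓ = n <;> simp [hn, ih (wf_act hw)]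

lemma plt_iff_of_SC {P Q : Proc} (h : SC P Q) (ℓ m : ℕ) :
    P.plt ℓ m ↔ Q.plt ℓ m := by
  induction h with
  | refl P => rfl
  | symm _ ih => exact ih.symm
  | trans _ _ ih1 ih2 => exact ih1.trans ih2
  | parComm P Q => rw [Proc.plt_par, Proc.plt_par, or_comm]
  | parAssoc P Q R => simp [Proc.plt_par, or_assoc]
  | parUnit P => simp [Proc.plt_par, Proc.plt_one]
  | parCong _ _ ih1 ih2 => rw [Proc.plt_par, Proc.plt_par, ih1, ih2]
  | actCong b a n h ih => rw [Proc.plt_act, Proc.plt_act, ih, locs_eq_of_SC h]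

lemma plt_irrefl {P : Proc} (hw : P.WF) {ℓ : ℕ} : ¬ P.plt ℓ ℓ := by
  intro h
  induction P with
  | one => exact Proc.plt_one h
  | par P Q ihP ihQ =>
      rcases Proc.plt_par.1 h with h | h
      exacts [ihP (wf_par_left hw) h, ihQ (wf_par_right hw) h]
  | act b a n P ih =>
      rcases Proc.plt_act.1 h with ⟨rfl, hm⟩ | h
      exacts [wf_act_not_mem hw hm, ih (wf_act hw) h]

lemma plt_trans {P : Proc} (hw : P.WF) {ℓ m n : ℕ}
    (h1 : P.plt ℓ m) (h2 : P.plt m n) : P.plt ℓ n := by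
  induction P with
  | one => exact absurd h1 Proc.plt_one
  | par P Q ihP ihQ =>
      rcases Proc.plt_par.1 h1 with h1 | h1 <;> rcases Proc.plt_par.1 h2 with h2 | h2
      · exact .parL (ihP (wf_par_left hw) h1 h2)
      · exact absurd (Proc.plt_mem h2).1 (wf_par_disj hw m (Proc.plt_mem h1).2)
      · exact absurd (Proc.plt_mem h1).2 (wf_par_disj hw m (Proc.plt_mem h2).1)
      · exact .parR (ihQ (wf_par_right hw) h1 h2)
  | act b a k P ih =>
      rcases Proc.plt_act.1 h1 with ⟨rfl, hm⟩ | hu1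
      · rcases Proc.plt_act.1 h2 with ⟨rfl, hn⟩ | hu2
        · exact absurd hm (wf_act_not_mem hw)
        · exact .here (Proc.plt_mem hu2).2
      · rcases Proc.plt_act.1 h2 with ⟨rfl, hn⟩ | hu2
        · exact absurd (Proc.plt_mem hu1).2 (wf_act_not_mem hw)
        · exact .under (ih (wf_act hw) hu1 hu2)

lemma pairing_ne {P : Proc} {c : Finset (ℕ × ℕ)} (hp : IsPairing P c)
    {p : ℕ × ℕ} (h : p ∈ c) : p.1 ≠ p.2 := by
  intro he
  have h1 := (hp.1 p h).1
  have h2 := (hp.1 p h).2.1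
  rw [he, h2] at h1
  simp at h1

lemma pairing_mem_locs {P : Proc} {c : Finset (ℕ × ℕ)} (hp : IsPairing P c)
    {p : ℕ × ℕ} (h : p ∈ c) : p.1 ∈ P.locs ∧ p.2 ∈ P.locs :=
  ⟨Proc.pol_isSome.1 (by simp [(hp.1 p h).1]),
   Proc.pol_isSome.1 (by simp [(hp.1 p h).2.1])⟩

lemma mem_pdom {c : Finset (ℕ × ℕ)} {x : ℕ} :
    x ∈ pdom c ↔ ∃ p ∈ c, x = p.1 ∨ x = p.2 := by
  simp only [pdom, Finset.mem_union, Finset.mem_image]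
  constructor
  · rintro (⟨p, hp, rfl⟩ | ⟨p, hp, rfl⟩)
    exacts [⟨p, hp, Or.inl rfl⟩, ⟨p, hp, Or.inr rfl⟩]
  · rintro ⟨p, hp, rfl | rfl⟩
    exacts [Or.inl ⟨p, hp, rfl⟩, Or.inr ⟨p, hp, rfl⟩]

lemma peqv_iff {P : Proc} {c : Finset (ℕ × ℕ)} (hp : IsPairing P c) {x y : ℕ} :
    peqv c x y ↔ x = y ∨ (x, y) ∈ c ∨ (y, x) ∈ c := by
  constructor
  · intro h
    induction h with
    | rel a b hab => exact Or.inr hab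
    | refl a => exact Or.inl rfl
    | symm a b _ ih => tauto
    | trans a b d _ _ ih1 ih2 =>
        rcases ih1 with rfl | h1 | h1
        · exact ih2
        all_goals rcases ih2 with rfl | h2 | h2
        · exact Or.inr (Or.inl h1)
        · by_cases he : (a, b) = (b, d)
          · simp only [Prod.mk.injEq] at he; exact Or.inl (he.1.trans he.2)
          · exact absurd rfl (hp.2 _ h2 _ h1 (Ne.symm he)).2.2
        · by_cases he : (a, b) = (d, b)
          · simp only [Prod.mk.injEq] at he; exact Or.inl he.1
          · exact absurd rfl (hp.2 _ h1 _ h2 he).2.1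
        · exact Or.inr (Or.inr h1)
        · by_cases he : (b, a) = (b, d)
          · simp only [Prod.mk.injEq] at he; exact Or.inl he.2
          · exact absurd rfl (hp.2 _ h1 _ h2 he).1
        · by_cases he : (b, a) = (d, b)
          · simp only [Prod.mk.injEq] at he; exact Or.inl (he.2.trans he.1)
          · exact absurd rfl (hp.2 _ h1 _ h2 he).2.2
  · rintro (rfl | h | h)
    · exact Relation.EqvGen.refl x
    · exact Relation.EqvGen.rel _ _ (Or.inl h)
    · exact Relation.EqvGen.rel _ _ (Or.inr h)

/-- Canonical redex form. -/
def PC (a ℓ m : ℕ) (P₁ Q₁ R : Proc) : Proc :=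
  .par (.act true a ℓ P₁) (.par (.act false a m Q₁) R)

/-- Canonical reduct form. -/
def QC (P₁ Q₁ R : Proc) : Proc := .par P₁ (.par Q₁ R)

section Canon

variable {a ℓ m : ℕ} {P₁ Q₁ R : Proc}

lemma canon_facts (hw : (PC a ℓ m P₁ Q₁ R).WF) :
    ℓ ≠ m ∧ ℓ ∉ P₁.locs ∧ ℓ ∉ Q₁.locs ∧ ℓ ∉ R.locs ∧
      m ∉ P₁.locs ∧ m ∉ Q₁.locs ∧ m ∉ R.locs := by
  simp only [PC, Proc.WF, Proc.locList, List.nodup_append', List.nodup_cons,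
    List.mem_append, List.mem_cons, not_or, List.disjoint_left] at hw
  simp only [Proc.mem_locs]
  refine ⟨(hw.2.2 (Or.inl rfl)).1.1, hw.1.1, (hw.2.2 (Or.inl rfl)).1.2,
    (hw.2.2 (Or.inl rfl)).2, ?_, hw.2.1.1.1, hw.2.1.2.2 (Or.inl rfl)⟩
  exact fun hm => ((hw.2.2 (Or.inr hm)).1.1 rfl)

lemma locs_QC {n : ℕ} :
    n ∈ (QC P₁ Q₁ R).locs ↔ n ∈ P₁.locs ∨ n ∈ Q₁.locs ∨ n ∈ R.locs := by
  simp [QC, Proc.locs, Proc.locList]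

lemma wf_QC (hw : (PC a ℓ m P₁ Q₁ R).WF) : (QC P₁ Q₁ R).WF := by
  have hsub : (QC P₁ Q₁ R).locList.Sublist (PC a ℓ m P₁ Q₁ R).locList := by
    simp only [PC, QC, Proc.locList, List.cons_append]
    refine List.Sublist.trans ?_ (List.sublist_cons_self _ _)
    refine List.Sublist.append (List.Sublist.refl _) ?_
    exact List.sublist_cons_self _ _
  exact hsub.nodup hw

lemma pol_PC_left : (PC a ℓ m P₁ Q₁ R).pol ℓ = some true := by
  simp [PC, Proc.pol, Option.orElse]

lemma subj_PC_left : (PC a ℓ m P₁ Q₁ R).subj ℓ = some a := by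
  simp [PC, Proc.subj, Option.orElse]

lemma pol_PC_right (hw : (PC a ℓ m P₁ Q₁ R).WF) :
    (PC a ℓ m P₁ Q₁ R).pol m = some false := by
  obtain ⟨h1, _, _, _, h5, _, _⟩ := canon_facts hw
  simp [PC, Proc.pol, Option.orElse, Ne.symm h1, Proc.pol_eq_none h5]

lemma subj_PC_right (hw : (PC a ℓ m P₁ Q₁ R).WF) :
    (PC a ℓ m P₁ Q₁ R).subj m = some a := by
  obtain ⟨h1, _, _, _, h5, _, _⟩ := canon_facts hw
  simp [PC, Proc.subj, Option.orElse, Ne.symm h1, Proc.subj_eq_none h5]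

lemma pol_PC_QC {n : ℕ} (h1 : n ≠ ℓ) (h2 : n ≠ m) :
    (PC a ℓ m P₁ Q₁ R).pol n = (QC P₁ Q₁ R).pol n := by
  simp [PC, QC, Proc.pol, h1, h2]

lemma subj_PC_QC {n : ℕ} (h1 : n ≠ ℓ) (h2 : n ≠ m) :
    (PC a ℓ m P₁ Q₁ R).subj n = (QC P₁ Q₁ R).subj n := by
  simp [PC, QC, Proc.subj, h1, h2]

lemma plt_QC_PC {u v : ℕ} (h : (QC P₁ Q₁ R).plt u v) :
    (PC a ℓ m P₁ Q₁ R).plt u v := by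
  rcases Proc.plt_par.1 h with h | h
  · exact .parL (.under h)
  rcases Proc.plt_par.1 h with h | h
  · exact .parR (.parL (.under h))
  · exact .parR (.parR h)

lemma plt_PC_cases {u v : ℕ} (h : (PC a ℓ m P₁ Q₁ R).plt u v) :
    (u = ℓ ∧ v ∈ P₁.locs) ∨ (u = m ∧ v ∈ Q₁.locs) ∨ (QC P₁ Q₁ R).plt u v := by
  rcases Proc.plt_par.1 h with h | h
  · rcases Proc.plt_act.1 h with ⟨rfl, hv⟩ | h
    · exact Or.inl ⟨rfl, hv⟩
    · exact Or.inr (Or.inr (.parL h))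
  rcases Proc.plt_par.1 h with h | h
  · rcases Proc.plt_act.1 h with ⟨rfl, hv⟩ | h
    · exact Or.inr (Or.inl ⟨rfl, hv⟩)
    · exact Or.inr (Or.inr (.parR (.parL h)))
  · exact Or.inr (Or.inr (.parR (.parR h)))

lemma not_plt_PC_left (hw : (PC a ℓ m P₁ Q₁ R).WF) {u : ℕ} :
    ¬ (PC a ℓ m P₁ Q₁ R).plt u ℓ := by
  obtain ⟨h1, h2, h3, h4, h5, h6, h7⟩ := canon_facts hw
  intro h
  rcases plt_PC_cases h with ⟨rfl, hv⟩ | ⟨rfl, hv⟩ | h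
  · exact h2 hv
  · exact h3 hv
  · rcases locs_QC.1 (Proc.plt_mem h).2 with hv | hv | hv
    exacts [h2 hv, h3 hv, h4 hv]

lemma not_plt_PC_right (hw : (PC a ℓ m P₁ Q₁ R).WF) {u : ℕ} :
    ¬ (PC a ℓ m P₁ Q₁ R).plt u m := by
  obtain ⟨h1, h2, h3, h4, h5, h6, h7⟩ := canon_facts hw
  intro h
  rcases plt_PC_cases h with ⟨rfl, hv⟩ | ⟨rfl, hv⟩ | h
  · exact h5 hv
  · exact h6 hv
  · rcases locs_QC.1 (Proc.plt_mem h).2 with hv | hv | hv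
    exacts [h5 hv, h6 hv, h7 hv]

lemma mem_locs_QC_ne (hw : (PC a ℓ m P₁ Q₁ R).WF) {n : ℕ}
    (hn : n ∈ (QC P₁ Q₁ R).locs) : n ≠ ℓ ∧ n ≠ m := by
  obtain ⟨h1, h2, h3, h4, h5, h6, h7⟩ := canon_facts hw
  rcases locs_QC.1 hn with hv | hv | hv <;>
    exact ⟨fun he => by subst he; tauto, fun he => by subst he; tauto⟩

end Canon

lemma peqv_mono {c c' : Finset (ℕ × ℕ)} (h : c' ⊆ c) {x y : ℕ} (he : peqv c' x y) :
    peqv c x y :=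
  Relation.EqvGen.mono (fun a b (hab : (a, b) ∈ c' ∨ (b, a) ∈ c') => hab.imp (fun h' => h h') (fun h' => h h')) x y he

lemma peqv_empty {x y : ℕ} (h : peqv ∅ x y) : x = y := by
  induction h with
  | rel a b hab => simp at hab
  | refl a => rfl
  | symm a b _ ih => exact ih.symm
  | trans a b d _ _ ih1 ih2 => exact ih1.trans ih2

lemma isPairing_of_SC {P Q : Proc} {c : Finset (ℕ × ℕ)} (h : SC P Q) (hw : P.WF)
    (hp : IsPairing P c) : IsPairing Q c := by
  refine ⟨fun p hp' => ?_, hp.2⟩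
  have := hp.1 p hp'
  rw [← pol_eq_of_SC h hw, ← pol_eq_of_SC h hw, ← subj_eq_of_SC h hw,
    ← subj_eq_of_SC h hw]
  exact this

lemma consistent_of_SC {P Q : Proc} {c : Finset (ℕ × ℕ)} (h : SC P Q) (hw : P.WF)
    (hc : Consistent P c) : Consistent Q c := by
  constructor
  · exact fun u v huv hv => hc.1 u v ((plt_iff_of_SC h u v).2 huv) hv
  · intro x hx
    refine hc.2 x (Relation.TransGen.mono ?_ _ _ hx)
    rintro p q ⟨u, v, e1, e2, e3⟩
    exact ⟨u, v, e1, (plt_iff_of_SC h u v).2 e2, e3⟩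

section StepLemmas

variable {a ℓ m : ℕ} {P₁ Q₁ R : Proc}

lemma step_fwd {c : Finset (ℕ × ℕ)} (hw : (PC a ℓ m P₁ Q₁ R).WF)
    (hp : IsPairing (PC a ℓ m P₁ Q₁ R) c)
    (hcons : Consistent (PC a ℓ m P₁ Q₁ R) c)
    (hmem : (ℓ, m) ∈ c) :
    IsPairing (QC P₁ Q₁ R) (c.erase (ℓ, m)) ∧
      Consistent (QC P₁ Q₁ R) (c.erase (ℓ, m)) := by
  have key : ∀ q ∈ c.erase (ℓ, m), q.1 ≠ ℓ ∧ q.1 ≠ m ∧ q.2 ≠ ℓ ∧ q.2 ≠ m := by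
    intro q hq
    have hq' : q ∈ c := Finset.mem_of_mem_erase hq
    have hne : q ≠ (ℓ, m) := Finset.ne_of_mem_erase hq
    have h1 := hp.2 q hq' (ℓ, m) hmem hne
    have h2 := hp.2 (ℓ, m) hmem q hq' (Ne.symm hne)
    exact ⟨h1.1, h1.2.2, Ne.symm h2.2.2, h1.2.1⟩
  have hpq : IsPairing (QC P₁ Q₁ R) (c.erase (ℓ, m)) := by
    constructor
    · intro q hq
      obtain ⟨k1, k2, k3, k4⟩ := key q hq
      have := hp.1 q (Finset.mem_of_mem_erase hq)
      rw [pol_PC_QC k1 k2, pol_PC_QC k3 k4, subj_PC_QC k1 k2, subj_PC_QC k3 k4] at this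
      exact this
    · exact fun p hp' q hq' hne =>
        hp.2 p (Finset.mem_of_mem_erase hp') q (Finset.mem_of_mem_erase hq') hne
  refine ⟨hpq, ?_, ?_⟩
  · intro u v huv hv
    have huv' := plt_QC_PC (a := a) (ℓ := ℓ) (m := m) huv
    obtain ⟨q, hq, hqv⟩ := mem_pdom.1 hv
    have hv' : v ∈ pdom c :=
      mem_pdom.2 ⟨q, Finset.mem_of_mem_erase hq, hqv⟩
    obtain ⟨q', hq', hqu⟩ := mem_pdom.1 (hcons.1 u v huv' hv')
    have hune := mem_locs_QC_ne hw (Proc.plt_mem huv).1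
    have hq'ne : q' ≠ (ℓ, m) := by
      rintro rfl
      rcases hqu with rfl | rfl
      exacts [hune.1 rfl, hune.2 rfl]
    exact mem_pdom.2 ⟨q', Finset.mem_erase.2 ⟨hq'ne, hq'⟩, hqu⟩
  · intro x hx
    refine hcons.2 x (Relation.TransGen.mono ?_ _ _ hx)
    rintro p q ⟨u, v, e1, e2, e3⟩
    exact ⟨u, v, peqv_mono (Finset.erase_subset _ _) e1, plt_QC_PC e2,
      peqv_mono (Finset.erase_subset _ _) e3⟩

lemma step_back {c' : Finset (ℕ × ℕ)} (hw : (PC a ℓ m P₁ Q₁ R).WF)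
    (hq : IsPairing (QC P₁ Q₁ R) c')
    (hcq : Consistent (QC P₁ Q₁ R) c') :
    IsPairing (PC a ℓ m P₁ Q₁ R) (insert (ℓ, m) c') ∧
      Consistent (PC a ℓ m P₁ Q₁ R) (insert (ℓ, m) c') := by
  have hlm : ℓ ≠ m := (canon_facts hw).1
  have comps : ∀ q ∈ c', q.1 ≠ ℓ ∧ q.1 ≠ m ∧ q.2 ≠ ℓ ∧ q.2 ≠ m := by
    intro q hq'
    obtain ⟨m1, m2⟩ := pairing_mem_locs hq hq'
    exact ⟨(mem_locs_QC_ne hw m1).1, (mem_locs_QC_ne hw m1).2,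
      (mem_locs_QC_ne hw m2).1, (mem_locs_QC_ne hw m2).2⟩
  have hpP : IsPairing (PC a ℓ m P₁ Q₁ R) (insert (ℓ, m) c') := by
    constructor
    · intro p hp'
      rcases Finset.mem_insert.1 hp' with rfl | hp'
      · refine ⟨pol_PC_left, pol_PC_right hw, ?_, ?_⟩
        · rw [subj_PC_left, subj_PC_right hw]
        · rw [subj_PC_left]; simp
      · obtain ⟨k1, k2, k3, k4⟩ := comps p hp'
        have := hq.1 p hp'
        rw [← pol_PC_QC (a := a) k1 k2, ← pol_PC_QC (a := a) k3 k4,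
          ← subj_PC_QC (a := a) k1 k2, ← subj_PC_QC (a := a) k3 k4] at this
        exact this
    · intro p hp' q hq' hne
      rcases Finset.mem_insert.1 hp' with rfl | hp' <;>
        rcases Finset.mem_insert.1 hq' with rfl | hq'
      · exact absurd rfl hne
      · obtain ⟨k1, k2, k3, k4⟩ := comps q hq'
        exact ⟨Ne.symm k1, Ne.symm k4, Ne.symm k3⟩
      · obtain ⟨k1, k2, k3, k4⟩ := comps p hp'
        exact ⟨k1, k4, k2⟩
      · exact hq.2 p hp' q hq' hne
  have claim0l : ∀ x, peqv (insert (ℓ, m) c') x ℓ → x = ℓ ∨ x = m := by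
    intro x hx
    rcases (peqv_iff hpP).1 hx with rfl | h | h
    · exact Or.inl rfl
    · rcases Finset.mem_insert.1 h with he | h
      · exact absurd (congrArg Prod.snd he) hlm
      · exact absurd rfl (comps _ h).2.2.1
    · rcases Finset.mem_insert.1 h with he | h
      · exact Or.inr (congrArg Prod.snd he)
      · exact absurd rfl (comps _ h).1
  have claim0m : ∀ x, peqv (insert (ℓ, m) c') x m → x = ℓ ∨ x = m := by
    intro x hx
    rcases (peqv_iff hpP).1 hx with rfl | h | h
    · exact Or.inr rfl
    · rcases Finset.mem_insert.1 h with he | h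
      · exact Or.inl (congrArg Prod.fst he)
      · exact absurd rfl (comps _ h).2.2.2
    · rcases Finset.mem_insert.1 h with he | h
      · exact absurd (congrArg Prod.fst he) (Ne.symm hlm)
      · exact absurd rfl (comps _ h).2.1
  have claim1 : ∀ x y, consRel (PC a ℓ m P₁ Q₁ R) (insert (ℓ, m) c') x y →
      y ≠ ℓ ∧ y ≠ m := by
    rintro x y ⟨u, v, e1, e2, e3⟩
    constructor
    · rintro rfl
      rcases claim0l v e3 with rfl | rfl
      · exact not_plt_PC_left hw e2
      · exact not_plt_PC_right hw e2
    · rintro rfl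
      rcases claim0m v e3 with rfl | rfl
      · exact not_plt_PC_left hw e2
      · exact not_plt_PC_right hw e2
  have claim2 : ∀ x y, consRel (PC a ℓ m P₁ Q₁ R) (insert (ℓ, m) c') x y →
      x ≠ ℓ → x ≠ m → consRel (QC P₁ Q₁ R) c' x y := by
    rintro x y ⟨u, v, e1, e2, e3⟩ hx1 hx2
    have hu1 : u ≠ ℓ := fun he => by
      rcases claim0l x (he ▸ e1) with rfl | rfl
      exacts [hx1 rfl, hx2 rfl]
    have hu2 : u ≠ m := fun he => by
      rcases claim0m x (he ▸ e1) with rfl | rfl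
      exacts [hx1 rfl, hx2 rfl]
    have e2' : (QC P₁ Q₁ R).plt u v := by
      rcases plt_PC_cases e2 with ⟨rfl, _⟩ | ⟨rfl, _⟩ | h
      exacts [absurd rfl hu1, absurd rfl hu2, h]
    have hv := mem_locs_QC_ne hw (Proc.plt_mem e2').2
    have e1' : peqv c' x u := by
      rcases (peqv_iff hpP).1 e1 with rfl | h | h
      · exact Relation.EqvGen.refl _
      · rcases Finset.mem_insert.1 h with he | h
        · exact absurd (congrArg Prod.fst he) hx1
        · exact Relation.EqvGen.rel _ _ (Or.inl h)
      · rcases Finset.mem_insert.1 h with he | h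
        · exact absurd (congrArg Prod.fst he) hu1
        · exact Relation.EqvGen.rel _ _ (Or.inr h)
    have e3' : peqv c' v y := by
      rcases (peqv_iff hpP).1 e3 with rfl | h | h
      · exact Relation.EqvGen.refl _
      · rcases Finset.mem_insert.1 h with he | h
        · exact absurd (congrArg Prod.fst he) hv.1
        · exact Relation.EqvGen.rel _ _ (Or.inl h)
      · rcases Finset.mem_insert.1 h with he | h
        · exact absurd (congrArg Prod.snd he) hv.2
        · exact Relation.EqvGen.rel _ _ (Or.inr h)
    exact ⟨u, v, e1', e2', e3'⟩
  have claim1T : ∀ x y,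
      Relation.TransGen (consRel (PC a ℓ m P₁ Q₁ R) (insert (ℓ, m) c')) x y →
      y ≠ ℓ ∧ y ≠ m := by
    intro x y h
    induction h with
    | single h' => exact claim1 _ _ h'
    | tail _ h' _ => exact claim1 _ _ h'
  have transfer : ∀ x y,
      Relation.TransGen (consRel (PC a ℓ m P₁ Q₁ R) (insert (ℓ, m) c')) x y →
      x ≠ ℓ → x ≠ m → Relation.TransGen (consRel (QC P₁ Q₁ R) c') x y := by
    intro x y h
    induction h with
    | single h' => exact fun h1 h2 => .single (claim2 _ _ h' h1 h2)
    | tail hxb hbz ih =>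
        intro h1 h2
        obtain ⟨hb1, hb2⟩ := claim1T _ _ hxb
        exact .tail (ih h1 h2) (claim2 _ _ hbz hb1 hb2)
  refine ⟨hpP, ?_, ?_⟩
  · intro u v huv hv
    rcases plt_PC_cases huv with ⟨heq, _⟩ | ⟨heq, _⟩ | h
    · exact mem_pdom.2 ⟨(ℓ, m), Finset.mem_insert_self _ _, Or.inl heq⟩
    · exact mem_pdom.2 ⟨(ℓ, m), Finset.mem_insert_self _ _, Or.inr heq⟩
    · have hvne := mem_locs_QC_ne hw (Proc.plt_mem h).2
      obtain ⟨q, hq', hqv⟩ := mem_pdom.1 hv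
      have hq'' : q ∈ c' := by
        rcases Finset.mem_insert.1 hq' with rfl | hq''
        · rcases hqv with rfl | rfl
          exacts [absurd rfl hvne.1, absurd rfl hvne.2]
        · exact hq''
      obtain ⟨q2, hq2, hq2u⟩ := mem_pdom.1 (hcq.1 u v h (mem_pdom.2 ⟨q, hq'', hqv⟩))
      exact mem_pdom.2 ⟨q2, Finset.mem_insert_of_mem hq2, hq2u⟩
  · intro x hx
    obtain ⟨h1, h2⟩ := claim1T _ _ hx
    exact hcq.2 x (transfer _ _ hx h1 h2)

end StepLemmas

lemma extract : ∀ (P : Proc) (b : Bool) (a ℓ : ℕ), P.pol ℓ = some b →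
    P.subj ℓ = some a → (∀ k, ¬ P.plt k ℓ) →
    ∃ P₁ R, SC P (.par (.act b a ℓ P₁) R) := by
  intro P
  induction P with
  | one => intro b a ℓ h; simp [Proc.pol] at h
  | par P Q ihP ihQ =>
      intro b a ℓ hpol hsubj hmin
      simp only [Proc.pol] at hpol
      simp only [Proc.subj] at hsubj
      cases hP : P.pol ℓ with
      | some b' =>
          rw [hP] at hpol
          have hb : b' = b := by simpa [Option.orElse] using hpol
          subst hb
          have hmem : ℓ ∈ P.locs := Proc.pol_isSome.1 (by simp [hP])
          have hsub : P.subj ℓ = some a := by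
            cases hS : P.subj ℓ with
            | none =>
                have := Proc.subj_isSome.2 hmem
                rw [hS] at this; simp at this
            | some a' =>
                rw [hS] at hsubj
                have : a' = a := by simpa [Option.orElse] using hsubj
                rw [this]
          obtain ⟨P₁, R, hsc⟩ := ihP b' a ℓ hP hsub (fun k hk => hmin k (.parL hk))
          exact ⟨P₁, .par R Q,
            (SC.parCong hsc (SC.refl Q)).trans (SC.parAssoc _ _ _)⟩
      | none =>
          rw [hP] at hpol
          have hQ : Q.pol ℓ = some b := by simpa [Option.orElse] using hpol
          have hnotP : ℓ ∉ P.locs := fun h => by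
            have := Proc.pol_isSome.2 h; rw [hP] at this; simp at this
          have hsubP : P.subj ℓ = none := Proc.subj_eq_none hnotP
          rw [hsubP] at hsubj
          have hQs : Q.subj ℓ = some a := by simpa [Option.orElse] using hsubj
          obtain ⟨P₁, R, hsc⟩ := ihQ b a ℓ hQ hQs (fun k hk => hmin k (.parR hk))
          exact ⟨P₁, .par R P,
            ((SC.parComm P Q).trans (SC.parCong hsc (SC.refl P))).trans
              (SC.parAssoc _ _ _)⟩
  | act b' a' n P ih =>
      intro b a ℓ hpol hsubj hmin
      by_cases he : ℓ = n
      · subst he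
        have hb : b' = b := by simpa [Proc.pol] using hpol
        have ha : a' = a := by simpa [Proc.subj] using hsubj
        subst hb; subst ha
        exact ⟨P, .one, SC.symm ((SC.parComm _ _).trans (SC.parUnit _))⟩
      · simp only [Proc.pol, if_neg he] at hpol
        have hmem : ℓ ∈ P.locs := Proc.pol_isSome.1 (by simp [hpol])
        exact absurd (Proc.plt.here hmem) (hmin n)

lemma exists_min_pair {P : Proc} {c : Finset (ℕ × ℕ)} (hp : IsPairing P c)
    (hcons : Consistent P c) (hne : c.Nonempty) :
    ∃ p ∈ c, (∀ k, ¬ P.plt k p.1) ∧ (∀ k, ¬ P.plt k p.2) := by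
  classical
  set r : (ℕ × ℕ) → (ℕ × ℕ) → Prop := fun q p =>
    q ∈ c ∧ p ∈ c ∧ ∃ u v, (u = q.1 ∨ u = q.2) ∧ (v = p.1 ∨ v = p.2) ∧ P.plt u v
    with hr
  have hrc : ∀ q p, r q p → consRel P c q.1 p.1 := by
    rintro q p ⟨hq, hp', u, v, hu, hv, huv⟩
    refine ⟨u, v, ?_, huv, ?_⟩
    · rcases hu with rfl | rfl
      · exact Relation.EqvGen.refl _
      · exact Relation.EqvGen.rel _ _ (Or.inl (by rwa [Prod.mk.eta]))
    · rcases hv with rfl | rfl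
      · exact Relation.EqvGen.refl _
      · exact Relation.EqvGen.rel _ _ (Or.inr (by rwa [Prod.mk.eta]))
  have hmapT : ∀ q p, Relation.TransGen r q p →
      Relation.TransGen (consRel P c) q.1 p.1 := by
    intro q p h
    induction h with
    | single h' => exact .single (hrc _ _ h')
    | tail _ h' ih => exact .tail ih (hrc _ _ h')
  have hirr : ∀ q, ¬ Relation.TransGen r q q := fun q h => hcons.2 q.1 (hmapT q q h)
  let s : {p // p ∈ c} → {p // p ∈ c} → Prop := fun q p => Relation.TransGen r q.1 p.1
  haveI : IsTrans {p // p ∈ c} s := ⟨fun _ _ _ h1 h2 => h1.trans h2⟩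
  haveI : IsIrrefl {p // p ∈ c} s := ⟨fun q h => hirr q.1 h⟩
  have hwf : WellFounded s := Finite.wellFounded_of_trans_of_irrefl s
  obtain ⟨z, -, hzmin⟩ := hwf.has_min Set.univ
    ⟨⟨hne.choose, hne.choose_spec⟩, trivial⟩
  refine ⟨z.1, z.2, ?_, ?_⟩
  · intro k hk
    have hkdom : k ∈ pdom c :=
      hcons.1 k z.1.1 hk (mem_pdom.2 ⟨z.1, z.2, Or.inl rfl⟩)
    obtain ⟨q, hq, hqk⟩ := mem_pdom.1 hkdom
    have hrq : r q z.1 := ⟨hq, z.2, k, z.1.1, by tauto, Or.inl rfl, hk⟩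
    exact hzmin ⟨q, hq⟩ trivial (.single hrq)
  · intro k hk
    have hkdom : k ∈ pdom c :=
      hcons.1 k z.1.2 hk (mem_pdom.2 ⟨z.1, z.2, Or.inr rfl⟩)
    obtain ⟨q, hq, hqk⟩ := mem_pdom.1 hkdom
    have hrq : r q z.1 := ⟨hq, z.2, k, z.1.2, by tauto, Or.inr rfl, hk⟩
    exact hzmin ⟨q, hq⟩ trivial (.single hrq)

lemma exec_of_consistent : ∀ (N : ℕ) (P : Proc) (c : Finset (ℕ × ℕ)),
    c.card ≤ N → P.WF → IsPairing P c → Consistent P c →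
    ∃ Q l, ExecL P l Q ∧ l.toFinset = c := by
  intro N
  induction N with
  | zero =>
      intro P c hcard _ _ _
      have : c = ∅ := Finset.card_eq_zero.1 (Nat.le_zero.1 hcard)
      subst this
      exact ⟨P, [], .refl (SC.refl P), by simp⟩
  | succ N ih =>
      intro P c hcard hw hp hcons
      rcases eq_or_ne c ∅ with rfl | hne
      · exact ⟨P, [], .refl (SC.refl P), by simp⟩
      obtain ⟨p, hpc, hmin1, hmin2⟩ :=
        exists_min_pair hp hcons (Finset.nonempty_of_ne_empty hne)
      obtain ⟨hpol1, hpol2, hsubjeq, hsome⟩ := hp.1 p hpc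
      obtain ⟨a, ha⟩ := Option.isSome_iff_exists.1 hsome
      have ha2 : P.subj p.2 = some a := hsubjeq ▸ ha
      obtain ⟨P₁, R', hsc1⟩ := extract P true a p.1 hpol1 ha hmin1
      have hwc1 : (Proc.par (.act true a p.1 P₁) R').WF := wf_of_SC hsc1 hw
      have hne21 : p.2 ≠ p.1 := (pairing_ne hp hpc).symm
      have hmin2' : ∀ k, ¬ (Proc.par (.act true a p.1 P₁) R').plt k p.2 :=
        fun k hk => hmin2 k ((plt_iff_of_SC hsc1 _ _).2 hk)
      have hm_notP₁ : p.2 ∉ P₁.locs := fun h => hmin2' p.1 (.parL (.here h))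
      have hpol2' := (pol_eq_of_SC hsc1 hw p.2).symm.trans hpol2
      have hsubj2' := (subj_eq_of_SC hsc1 hw p.2).symm.trans ha2
      have hm_pol : R'.pol p.2 = some false := by
        simpa [Proc.pol, if_neg hne21, Proc.pol_eq_none hm_notP₁, Option.orElse]
          using hpol2'
      have hm_subj : R'.subj p.2 = some a := by
        simpa [Proc.subj, if_neg hne21, Proc.subj_eq_none hm_notP₁, Option.orElse]
          using hsubj2'
      have hminR' : ∀ k, ¬ R'.plt k p.2 := fun k hk => hmin2' k (.parR hk)
      obtain ⟨Q₁, R, hsc2⟩ := extract R' false a p.2 hm_pol hm_subj hminR'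
      have hsc : SC P (PC a p.1 p.2 P₁ Q₁ R) :=
        hsc1.trans (SC.parCong (SC.refl _) hsc2)
      have hwPC := wf_of_SC hsc hw
      have hpPC := isPairing_of_SC hsc hw hp
      have hcPC := consistent_of_SC hsc hw hcons
      have hpmem : (p.1, p.2) ∈ c := by rwa [Prod.mk.eta]
      obtain ⟨hpQ, hcQ⟩ := step_fwd hwPC hpPC hcPC hpmem
      have hwQ := wf_QC hwPC
      have hcard' : (c.erase (p.1, p.2)).card ≤ N := by
        rw [Finset.card_erase_of_mem hpmem]; omega
      obtain ⟨Q, l, hexec, hfin⟩ := ih (QC P₁ Q₁ R) _ hcard' hwQ hpQ hcQ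
      refine ⟨Q, (p.1, p.2) :: l, .step ?_ hexec, ?_⟩
      · exact ⟨a, P₁, Q₁, R, hsc, SC.refl _⟩
      · rw [List.toFinset_cons, hfin, Finset.insert_erase hpmem]

lemma pairing_of_exec : ∀ {P : Proc} {l : List (ℕ × ℕ)} {Q : Proc},
    ExecL P l Q → P.WF → IsPairing P l.toFinset ∧ Consistent P l.toFinset := by
  intro P l Q hexec
  induction hexec with
  | @refl P2 Q2 h =>
      intro hw
      simp only [List.toFinset_nil]
      refine ⟨⟨by simp, by simp⟩, ?_, ?_⟩
      · intro u v _ hv; simp [pdom] at hv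
      · intro x hx
        have hsub : ∀ y z, consRel P2 (∅ : Finset (ℕ × ℕ)) y z → P2.plt y z := by
          rintro y z ⟨u, v, e1, e2, e3⟩
          rw [peqv_empty e1, ← peqv_empty e3]
          exact e2
        have htr : Transitive P2.plt := fun _ _ _ h1 h2 => plt_trans hw h1 h2
        have hxx : Relation.TransGen P2.plt x x := Relation.TransGen.mono hsub _ _ hx
        rw [@Relation.transGen_eq_self _ P2.plt ⟨fun _ _ _ h1 h2 => htr h1 h2⟩] at hxx
        exact plt_irrefl hw hxx
  | @step P0 p Q0 l0 R0 hstep hrest ih =>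
      intro hw
      obtain ⟨a, P₁, Q₁, R₁, hP, hQ⟩ := hstep
      have hP' : SC P0 (PC a p.1 p.2 P₁ Q₁ R₁) := hP
      have hQ' : SC Q0 (QC P₁ Q₁ R₁) := hQ
      have hwPC := wf_of_SC hP' hw
      have hwQC := wf_QC hwPC
      have hwQ : Q0.WF := wf_of_SC (SC.symm hQ') hwQC
      obtain ⟨hpQ, hcQ⟩ := ih hwQ
      have hpQC := isPairing_of_SC hQ' hwQ hpQ
      have hcQC := consistent_of_SC hQ' hwQ hcQ
      obtain ⟨hpP, hcP⟩ := step_back hwPC hpQC hcQC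
      have hps : SC (PC a p.1 p.2 P₁ Q₁ R₁) P0 := SC.symm hP'
      constructor
      · have := isPairing_of_SC hps hwPC hpP
        simpa using this
      · have := consistent_of_SC hps hwPC hcP
        simpa using this

/-- a pairing `c` of `P` is consistent iff some execution of `P`
realizes exactly the pairing `c`. -/
theorem consistent_iff_exec (P : Proc) (hWF : P.WF) (c : Finset (ℕ × ℕ))
    (hc : IsPairing P c) :
    Consistent P c ↔ ∃ Q l, ExecL P l Q ∧ l.toFinset = c := by
  constructor
  · intro hcons
    exact exec_of_consistent c.card P c le_rfl hWF hc hcons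
  · rintro ⟨Q, l, hexec, rfl⟩
    exact (pairing_of_exec hexec hWF).2
end

section
/- Every consistent pairing of an MCCS term has even-cardinality domain, and if c is a consistent pairing of P and P →*_c Q then the number of action prefixes of Q equals the number of action prefixes of P minus the cardinality of the domain of c. -/
lemma pdom_card {P : Proc} {c : Finset (ℕ × ℕ)} (h : IsPairing P c) :
    (pdom c).card = 2 * c.card := by
  obtain ⟨h1, h2⟩ := h
  have hf : Set.InjOn Prod.fst (c : Set (ℕ × ℕ)) := by
    intro p hp q hq he
    by_contra hne
    exact (h2 p hp q hq hne).1 he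
  have hs : Set.InjOn Prod.snd (c : Set (ℕ × ℕ)) := by
    intro p hp q hq he
    by_contra hne
    exact (h2 p hp q hq hne).2.1 he
  have hd : Disjoint (c.image Prod.fst) (c.image Prod.snd) := by
    rw [Finset.disjoint_left]
    intro x hx hy
    simp only [Finset.mem_image] at hx hy
    obtain ⟨p, hp, rfl⟩ := hx
    obtain ⟨q, hq, he⟩ := hy
    rcases eq_or_ne p q with rfl | hne
    · have h3 := (h1 p hp).1
      have h4 := (h1 p hp).2.1
      rw [he, h3] at h4
      simp at h4
    · exact (h2 p hp q hq hne).2.2 he.symm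
  rw [pdom, Finset.card_union_of_disjoint hd, Finset.card_image_of_injOn hf,
    Finset.card_image_of_injOn hs]
  ring

lemma SC.size {P Q : Proc} (h : SC P Q) : P.size = Q.size := by
  induction h <;> simp_all [Proc.size] <;> omega

lemma Step.size {P : Proc} {p : ℕ × ℕ} {Q : Proc} (h : Step P p Q) :
    Q.size + 2 = P.size := by
  obtain ⟨a, P₁, Q₁, R, h1, h2⟩ := h
  have e1 := SC.size h1
  have e2 := SC.size h2
  simp [Proc.size] at e1 e2
  omega

lemma ExecL.size {P : Proc} {l : List (ℕ × ℕ)} {Q : Proc} (h : ExecL P l Q) :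
    Q.size + 2 * l.length = P.size := by
  induction h with
  | refl h => simp [SC.size h]
  | step hs _ ih =>
    have := Step.size hs
    simp only [List.length_cons] at *
    omega

/-- consistent pairings have even-cardinality domain, and an
execution realizing `c` consumes exactly `#(dom c)` action prefixes. -/
theorem consistent_pairing_card (P : Proc) :
    (∀ c : Finset (ℕ × ℕ), IsPairing P c → Consistent P c →
      Even (pdom c).card) ∧
    (∀ (c : Finset (ℕ × ℕ)) (Q : Proc) (l : List (ℕ × ℕ)), P.WF →
      IsPairing P c → Consistent P c → ExecL P l Q → l.toFinset = c →
      l.Nodup → Q.size = P.size - (pdom c).card) := by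
  constructor
  · intro c hp _
    rw [pdom_card hp]
    exact even_two_mul _
  · intro c Q l _ hp _ he hc hnd
    have h1 := ExecL.size he
    have h2 := pdom_card hp
    have h3 : c.card = l.length := by
      rw [← hc, List.toFinset_card_of_nodup hnd]
    omega
end

section
/- For any single execution step P → Q in MCCS, the linear implication ⌈P⌉ₐ ⊸ ⌈Q⌉ₐ is provable in pure MLL for some instantiation of the propositional variables of ⌈P⌉ₐ. -/
/-! ### Auxiliary development -/

namespace Form

theorem dual_dual (A : Form) : A.dual.dual = A := by
  induction A <;> simp [dual, *]

theorem dual_subst (σ : ℕ → Form) (A : Form) :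
    (A.subst σ).dual = A.dual.subst σ := by
  induction A <;> simp [dual, subst, dual_dual, *]

theorem subst_subst (σ τ : ℕ → Form) (A : Form) :
    (A.subst σ).subst τ = A.subst (fun α => (σ α).subst τ) := by
  induction A <;> simp [subst, dual_subst, *]

/-- Variables occurring in a formula. -/
def vars : Form → List ℕ
  | pv α => [α]
  | nv α => [α]
  | tens A B => A.vars ++ B.vars
  | parr A B => A.vars ++ B.vars
  | modp _ A => A.vars
  | modn _ A => A.vars

theorem subst_congr {σ τ : ℕ → Form} (A : Form)
    (h : ∀ α ∈ A.vars, σ α = τ α) : A.subst σ = A.subst τ := by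
  induction A <;> simp_all [vars, subst]

end Form

/-- Number of propositional variables used by the translation. -/
def cnt : Proc → ℕ
  | .one => 1
  | .par P Q => cnt P + cnt Q
  | .act _ _ _ P => cnt P + 1

theorem tAA_snd (P : Proc) : ∀ n, (tAA P n).2 = n + cnt P := by
  induction P with
  | one => intro n; simp [tAA, cnt]
  | par P Q ih1 ih2 => intro n; simp [tAA, cnt, ih1, ih2]; omega
  | act b a ℓ P ih => intro n; cases b <;> (simp [tAA, cnt, ih]; omega)

theorem tAA_par_fst (P Q : Proc) (n : ℕ) :
    (tAA (.par P Q) n).1 = .tens (tAA P n).1 (tAA Q (n + cnt P)).1 := by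
  simp [tAA, tAA_snd]

theorem tAA_actT_fst (a ℓ : ℕ) (P : Proc) (n : ℕ) :
    (tAA (.act true a ℓ P) n).1 =
      .parr (.modp a (.nv n)) (.tens (tAA P (n+1)).1 (.pv n)) := rfl

theorem tAA_actF_fst (a ℓ : ℕ) (P : Proc) (n : ℕ) :
    (tAA (.act false a ℓ P) n).1 =
      .parr (.tens (tAA P (n+1)).1 (.nv n)) (.modn a (.pv n)) := rfl

theorem tAA_vars (P : Proc) :
    ∀ n α, α ∈ (tAA P n).1.vars → n ≤ α ∧ α < n + cnt P := by
  induction P with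
  | one =>
    intro n α h
    simp [tAA, Form.vars] at h
    simp only [cnt]; omega
  | par P Q ih1 ih2 =>
    intro n α h
    rw [tAA_par_fst] at h
    simp [Form.vars] at h
    rcases h with h | h
    · have := ih1 n α h; simp only [cnt]; omega
    · have := ih2 (n + cnt P) α h; simp only [cnt]; omega
  | act b a ℓ P ih =>
    intro n α h
    cases b
    · rw [tAA_actF_fst] at h
      simp only [Form.vars, List.mem_append, List.mem_cons,
        List.not_mem_nil, or_false] at h
      simp only [cnt]
      rcases h with (h | h) | h
      · have := ih (n+1) α h; omega
      · omega
      · omega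
    · rw [tAA_actT_fst] at h
      simp only [Form.vars, List.mem_append, List.mem_cons,
        List.not_mem_nil, or_false] at h
      simp only [cnt]
      rcases h with h | (h | h)
      · omega
      · have := ih (n+1) α h; omega
      · omega

theorem tAA_subst_eq (P : Proc) :
    ∀ m n (σ : ℕ → Form),
      (∀ α, m ≤ α → α < m + cnt P → σ α = .pv (n + (α - m))) →
      (tAA P m).1.subst σ = (tAA P n).1 := by
  induction P with
  | one =>
    intro m n σ hσ
    have h := hσ m le_rfl (by simp [cnt])
    simp [tAA, Form.subst, h, Form.dual]
  | par P Q ih1 ih2 =>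
    intro m n σ hσ
    rw [tAA_par_fst, tAA_par_fst]
    simp only [Form.subst]
    rw [ih1 m n σ (fun α h1 h2 => hσ α h1 (by simp only [cnt]; omega)),
        ih2 (m + cnt P) (n + cnt P) σ (fun α h1 h2 => by
          rw [hσ α (by omega) (by simp only [cnt]; omega)]
          congr 1
          omega)]
  | act b a ℓ P ih =>
    intro m n σ hσ
    have hm : σ m = .pv n := by
      rw [hσ m le_rfl (by simp only [cnt]; omega)]; congr 1; omega
    have hP : (tAA P (m+1)).1.subst σ = (tAA P (n+1)).1 :=
      ih (m+1) (n+1) σ (fun α h1 h2 => by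
        rw [hσ α (by omega) (by simp only [cnt]; omega)]
        congr 1
        omega)
    cases b <;>
      simp [tAA_actT_fst, tAA_actF_fst, Form.subst, hm, hP, Form.dual]

/-! ### MLL provability helpers -/

theorem Prov.swap2 {b : Bool} {A B : Form} (h : Prov b [A, B]) :
    Prov b [B, A] :=
  h.exch (List.Perm.swap B A [])

theorem Prov.rot {b : Bool} {A : Form} {Γ : List Form}
    (h : Prov b (A :: Γ)) : Prov b (Γ ++ [A]) :=
  h.exch (List.perm_append_comm (l₁ := [A]) (l₂ := Γ))

theorem Prov.unrot {b : Bool} {A : Form} {Γ : List Form}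
    (h : Prov b (Γ ++ [A])) : Prov b (A :: Γ) :=
  h.exch (List.perm_append_comm (l₁ := Γ) (l₂ := [A]))

theorem prov_subst {b : Bool} {Γ : List Form} (σ : ℕ → Form)
    (h : Prov b Γ) : Prov b (Γ.map (Form.subst σ)) := by
  induction h with
  | ax b A =>
    have := Prov.ax b (A.subst σ)
    rw [Form.dual_subst] at this
    simpa using this
  | @cut b A Γ Δ h1 h2 ih1 ih2 =>
    have := Prov.cut (A := A.subst σ) (by simpa using ih1)
      (by simpa [Form.dual_subst] using ih2)
    simpa using this
  | @tens b A B Γ Δ h1 h2 ih1 ih2 =>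
    have := Prov.tens (by simpa using ih1) (by simpa using ih2)
    simpa [Form.subst] using this
  | @parr b A B Γ h1 ih1 =>
    have := Prov.parr (by simpa using ih1)
    simpa [Form.subst] using this
  | @exch b Γ Δ h1 hp ih1 =>
    exact ih1.exch (hp.map _)
  | @modp A Γ a h1 ih1 =>
    have := Prov.modp a (by simpa using ih1)
    simpa [Form.subst] using this
  | @modn A Γ a h1 ih1 =>
    have := Prov.modn a (by simpa using ih1)
    simpa [Form.subst] using this

theorem imp_refl (A : Form) : Prov false [A.dual, A] := Prov.ax false A

theorem imp_trans {A B C : Form} (h1 : Prov false [A.dual, B])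
    (h2 : Prov false [B.dual, C]) : Prov false [A.dual, C] :=
  Prov.cut (A := B) h1.swap2 h2

theorem imp_tens {A A' B B' : Form} (h1 : Prov false [A.dual, A'])
    (h2 : Prov false [B.dual, B']) :
    Prov false [(Form.tens A B).dual, Form.tens A' B'] := by
  have t : Prov false (Form.tens A' B' :: ([A.dual] ++ [B.dual])) :=
    Prov.tens h1.swap2 h2.swap2
  have t2 : Prov false (A.dual :: B.dual :: [Form.tens A' B']) :=
    t.exch (List.perm_append_comm (l₁ := [Form.tens A' B'])
      (l₂ := [A.dual, B.dual]))
  exact Prov.parr t2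

theorem imp_parr {A A' B B' : Form} (h1 : Prov false [A.dual, A'])
    (h2 : Prov false [B.dual, B']) :
    Prov false [(Form.parr A B).dual, Form.parr A' B'] := by
  have t : Prov false (Form.tens A.dual B.dual :: ([A'] ++ [B'])) :=
    Prov.tens h1 h2
  have t2 : Prov false (A' :: B' :: [Form.tens A.dual B.dual]) :=
    t.exch (List.perm_append_comm (l₁ := [Form.tens A.dual B.dual])
      (l₂ := [A', B']))
  exact (Prov.parr t2).swap2

theorem tens_comm (A B : Form) :
    Prov false [(Form.tens A B).dual, Form.tens B A] := by
  have t : Prov false (Form.tens B A :: ([B.dual] ++ [A.dual])) :=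
    Prov.tens (imp_refl B).swap2 (imp_refl A).swap2
  have t2 : Prov false (A.dual :: B.dual :: [Form.tens B A]) := by
    refine t.exch ?_
    refine (List.perm_append_comm (l₁ := [Form.tens B A])
      (l₂ := [B.dual, A.dual])).trans ?_
    exact List.Perm.swap A.dual B.dual [Form.tens B A]
  exact Prov.parr t2

theorem tens_assoc (A B C : Form) :
    Prov false [(Form.tens (Form.tens A B) C).dual,
      Form.tens A (Form.tens B C)] := by
  have tBC : Prov false (Form.tens B C :: ([B.dual] ++ [C.dual])) :=
    Prov.tens (imp_refl B).swap2 (imp_refl C).swap2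
  have t : Prov false (Form.tens A (Form.tens B C) ::
      ([A.dual] ++ [B.dual, C.dual])) :=
    Prov.tens (imp_refl A).swap2 tBC
  have t2 : Prov false (A.dual :: B.dual :: C.dual ::
      [Form.tens A (Form.tens B C)]) :=
    t.exch (List.perm_append_comm (l₁ := [Form.tens A (Form.tens B C)])
      (l₂ := [A.dual, B.dual, C.dual]))
  have t3 : Prov false (Form.parr A.dual B.dual :: C.dual ::
      [Form.tens A (Form.tens B C)]) := Prov.parr t2
  exact Prov.parr t3

theorem tens_assoc' (A B C : Form) :
    Prov false [(Form.tens A (Form.tens B C)).dual,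
      Form.tens (Form.tens A B) C] := by
  have tAB : Prov false (Form.tens A B :: ([A.dual] ++ [B.dual])) :=
    Prov.tens (imp_refl A).swap2 (imp_refl B).swap2
  have t : Prov false (Form.tens (Form.tens A B) C ::
      ([A.dual, B.dual] ++ [C.dual])) :=
    Prov.tens tAB (imp_refl C).swap2
  have t2 : Prov false (B.dual :: C.dual :: A.dual ::
      [Form.tens (Form.tens A B) C]) := by
    refine t.exch ?_
    refine (List.perm_append_comm (l₁ := [Form.tens (Form.tens A B) C])
      (l₂ := [A.dual, B.dual, C.dual])).trans ?_
    exact (List.Perm.swap B.dual A.dual _).trans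
      (List.Perm.cons B.dual (List.Perm.swap C.dual A.dual _))
  have t3 : Prov false (Form.parr B.dual C.dual :: A.dual ::
      [Form.tens (Form.tens A B) C]) := Prov.parr t2
  have t4 : Prov false (A.dual :: Form.parr B.dual C.dual ::
      [Form.tens (Form.tens A B) C]) :=
    t3.exch (List.Perm.swap A.dual (Form.parr B.dual C.dual) _)
  exact Prov.parr t4

theorem unit1 (B : Form) :
    Prov false [(Form.tens (Form.parr (Form.parr B B.dual).dual
      (Form.parr B B.dual)) B).dual, B] := by
  set X := Form.parr B B.dual with hX
  have h1 : Prov false [X] := Prov.parr (imp_refl B).swap2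
  have h2 : Prov false (X.dual :: [B.dual, B]) := by
    show Prov false (Form.tens B.dual B.dual.dual :: [B.dual, B])
    have t := Prov.tens (imp_refl B) (imp_refl B.dual)
    exact t.exch (List.Perm.cons _ (List.Perm.swap B.dual B []))
  have t : Prov false (Form.tens X X.dual :: ([] ++ [B.dual, B])) :=
    Prov.tens h1 h2
  have goal1 : Prov false [Form.parr (Form.tens X X.dual) B.dual, B] :=
    Prov.parr t
  have e : (Form.tens (Form.parr X.dual X) B).dual
      = Form.parr (Form.tens X X.dual) B.dual := by
    simp [Form.dual, Form.dual_dual]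
  rw [e]
  exact goal1

theorem unit2 (n : ℕ) (B : Form) :
    Prov false [B.dual, Form.tens (Form.parr (.nv n) (.pv n)) B] := by
  have h1 : Prov false [Form.parr (.nv n) (.pv n)] :=
    Prov.parr (imp_refl (.pv n))
  have t : Prov false (Form.tens (Form.parr (.nv n) (.pv n)) B ::
      ([] ++ [B.dual])) := Prov.tens h1 (imp_refl B).swap2
  exact t.swap2

theorem redex_mll (a : ℕ) (A B C : Form) :
    Prov false [(Form.tens (Form.parr (.modp a A) (.tens A A.dual))
        (Form.tens (Form.parr (.tens B A) (.modn a A.dual)) C)).dual,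
      Form.tens A (Form.tens B C)] := by
  set T := Form.tens A (Form.tens B C) with hT
  set T₁ := Form.tens (Form.modn a A.dual) (Form.parr A.dual A) with hT₁
  set T₂ := Form.tens (Form.parr B.dual A.dual) (Form.modp a A) with hT₂
  -- branch b2 : [modp a A, T₁]
  have axm : Prov false [Form.modp a A, Form.modn a A.dual] := by
    have := Prov.ax false (Form.modn a A.dual)
    simpa [Form.dual, Form.dual_dual] using this
  have bT₁ : Prov false (T₁ :: ([Form.modp a A] ++ [])) :=
    Prov.tens axm.swap2 (Prov.parr (imp_refl A))
  have b2 : Prov false (Form.modp a A :: [T₁]) := by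
    simpa using bT₁.swap2
  -- branch b1 : [parr B* A*, C*, T]
  have tBC : Prov false (Form.tens B C :: ([B.dual] ++ [C.dual])) :=
    Prov.tens (imp_refl B).swap2 (imp_refl C).swap2
  have tT : Prov false (T :: ([A.dual] ++ [B.dual, C.dual])) :=
    Prov.tens (imp_refl A).swap2 tBC
  have tT2 : Prov false (B.dual :: A.dual :: C.dual :: [T]) := by
    refine tT.exch ?_
    refine (List.perm_append_comm (l₁ := [T])
      (l₂ := [A.dual, B.dual, C.dual])).trans ?_
    exact List.Perm.swap B.dual A.dual _
  have b1 : Prov false (Form.parr B.dual A.dual :: [C.dual, T]) :=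
    Prov.parr tT2
  -- combine at T₂
  have tT₂ : Prov false (T₂ :: ([C.dual, T] ++ [T₁])) :=
    Prov.tens b1 b2
  have s1 : Prov false (T₂ :: C.dual :: T₁ :: [T]) := by
    refine tT₂.exch ?_
    refine List.Perm.cons T₂ ?_
    refine List.Perm.cons C.dual ?_
    exact List.Perm.swap T₁ T []
  have s2 : Prov false (T₁ :: Form.parr T₂ C.dual :: [T]) := by
    have := Prov.parr s1
    exact this.exch (List.Perm.swap T₁ (Form.parr T₂ C.dual) [T])
  have s3 : Prov false (Form.parr T₁ (Form.parr T₂ C.dual) :: [T]) :=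
    Prov.parr s2
  have e : (Form.tens (Form.parr (.modp a A) (.tens A A.dual))
        (Form.tens (Form.parr (.tens B A) (.modn a A.dual)) C)).dual
      = Form.parr T₁ (Form.parr T₂ C.dual) := by
    simp [hT₁, hT₂, Form.dual, Form.dual_dual]
  rw [e]
  exact s3

/-! ### The simulation relation on processes -/

/-- `RelA P Q`: for all counters, a substitution instance of `⌈P⌉ₐ`
linearly implies `⌈Q⌉ₐ` in pure MLL. -/
def RelA (P Q : Proc) : Prop :=
  ∀ m n, ∃ σ : ℕ → Form,
    Prov false [((tAA P m).1.subst σ).dual, (tAA Q n).1]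

theorem rel_refl (P : Proc) : RelA P P := by
  intro m n
  refine ⟨fun α => .pv (n + (α - m)), ?_⟩
  rw [tAA_subst_eq P m n _ (fun α _ _ => rfl)]
  exact imp_refl _

theorem rel_trans {P Q R : Proc} (h1 : RelA P Q) (h2 : RelA Q R) :
    RelA P R := by
  intro m n
  obtain ⟨σ₁, hσ₁⟩ := h1 m 0
  obtain ⟨σ₂, hσ₂⟩ := h2 0 n
  refine ⟨fun α => (σ₁ α).subst σ₂, ?_⟩
  rw [← Form.subst_subst, Form.dual_subst]
  have hmap := prov_subst σ₂ hσ₁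
  simp only [List.map_cons, List.map_nil] at hmap
  have hcut := Prov.cut hmap.swap2 hσ₂
  simpa [Form.dual_subst] using hcut

theorem rel_parComm (P Q : Proc) : RelA (.par P Q) (.par Q P) := by
  intro m n
  refine ⟨fun α => if α < m + cnt P then .pv (n + cnt Q + (α - m))
    else .pv (n + (α - (m + cnt P))), ?_⟩
  rw [tAA_par_fst, tAA_par_fst]
  simp only [Form.subst]
  rw [tAA_subst_eq P m (n + cnt Q) _ (fun α h1 h2 => by simp [h2]),
      tAA_subst_eq Q (m + cnt P) n _ (fun α h1 h2 => by
        simp [Nat.not_lt.mpr h1])]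
  exact tens_comm _ _

theorem rel_parAssoc1 (P Q R : Proc) :
    RelA (.par (.par P Q) R) (.par P (.par Q R)) := by
  intro m n
  refine ⟨fun α => .pv (n + (α - m)), ?_⟩
  rw [tAA_par_fst, tAA_par_fst, tAA_par_fst, tAA_par_fst,
      show m + cnt (Proc.par P Q) = m + cnt P + cnt Q from by
        simp only [cnt]; omega]
  simp only [Form.subst]
  rw [tAA_subst_eq P m n _ (fun α h1 h2 => rfl),
      tAA_subst_eq Q (m + cnt P) (n + cnt P) _ (fun α h1 h2 => by
        have : n + (α - m) = n + cnt P + (α - (m + cnt P)) := by omega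
        rw [this]),
      tAA_subst_eq R (m + cnt P + cnt Q) (n + cnt P + cnt Q) _
        (fun α h1 h2 => by
          have : n + (α - m) = n + cnt P + cnt Q + (α - (m + cnt P + cnt Q)) := by
            omega
          rw [this])]
  exact tens_assoc _ _ _

theorem rel_parAssoc2 (P Q R : Proc) :
    RelA (.par P (.par Q R)) (.par (.par P Q) R) := by
  intro m n
  refine ⟨fun α => .pv (n + (α - m)), ?_⟩
  rw [tAA_par_fst, tAA_par_fst, tAA_par_fst, tAA_par_fst,
      show n + cnt (Proc.par P Q) = n + cnt P + cnt Q from by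
        simp only [cnt]; omega]
  simp only [Form.subst]
  rw [tAA_subst_eq P m n _ (fun α h1 h2 => rfl),
      tAA_subst_eq Q (m + cnt P) (n + cnt P) _ (fun α h1 h2 => by
        have : n + (α - m) = n + cnt P + (α - (m + cnt P)) := by omega
        rw [this]),
      tAA_subst_eq R (m + cnt P + cnt Q) (n + cnt P + cnt Q) _
        (fun α h1 h2 => by
          have : n + (α - m) = n + cnt P + cnt Q + (α - (m + cnt P + cnt Q)) := by
            omega
          rw [this])]
  exact tens_assoc' _ _ _

theorem rel_parUnit1 (P : Proc) : RelA (.par .one P) P := by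
  intro m n
  refine ⟨fun α => if α = m then Form.parr (tAA P n).1 (tAA P n).1.dual
    else .pv (n + (α - (m + 1))), ?_⟩
  rw [tAA_par_fst,
      show m + cnt Proc.one = m + 1 from by simp only [cnt],
      show (tAA Proc.one m).1 = Form.parr (.nv m) (.pv m) from rfl]
  simp only [Form.subst]
  rw [tAA_subst_eq P (m + 1) n _ (fun α h1 h2 => by
    have hne : α ≠ m := by omega
    simp [hne])]
  simp only [if_true]
  exact unit1 (tAA P n).1

theorem rel_parUnit2 (P : Proc) : RelA P (.par .one P) := by
  intro m n
  refine ⟨fun α => .pv (n + 1 + (α - m)), ?_⟩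
  rw [tAA_par_fst,
      show n + cnt Proc.one = n + 1 from by simp only [cnt],
      show (tAA Proc.one n).1 = Form.parr (.nv n) (.pv n) from rfl,
      tAA_subst_eq P m (n + 1) _ (fun α h1 h2 => rfl)]
  exact unit2 n (tAA P (n + 1)).1

theorem rel_parCong {P P' Q Q' : Proc} (h1 : RelA P P') (h2 : RelA Q Q') :
    RelA (.par P Q) (.par P' Q') := by
  intro m n
  obtain ⟨σ₁, hσ₁⟩ := h1 m n
  obtain ⟨σ₂, hσ₂⟩ := h2 (m + cnt P) (n + cnt P')
  refine ⟨fun α => if α < m + cnt P then σ₁ α else σ₂ α, ?_⟩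
  have eP : (tAA P m).1.subst
      (fun α => if α < m + cnt P then σ₁ α else σ₂ α)
      = (tAA P m).1.subst σ₁ := by
    refine Form.subst_congr _ (fun α hα => ?_)
    have hv := tAA_vars P m α hα
    simp [hv.2]
  have eQ : (tAA Q (m + cnt P)).1.subst
      (fun α => if α < m + cnt P then σ₁ α else σ₂ α)
      = (tAA Q (m + cnt P)).1.subst σ₂ := by
    refine Form.subst_congr _ (fun α hα => ?_)
    have hv := tAA_vars Q (m + cnt P) α hα
    simp [Nat.not_lt.mpr hv.1]
  rw [tAA_par_fst, tAA_par_fst]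
  simp only [Form.subst]
  rw [eP, eQ]
  exact imp_tens hσ₁ hσ₂

theorem rel_actCong {P Q : Proc} (b : Bool) (a ℓ ℓ' : ℕ)
    (h : RelA P Q) : RelA (.act b a ℓ P) (.act b a ℓ' Q) := by
  intro m n
  obtain ⟨σ₁, hσ₁⟩ := h (m + 1) (n + 1)
  refine ⟨fun α => if α = m then .pv n else σ₁ α, ?_⟩
  have hP : (tAA P (m+1)).1.subst (fun α => if α = m then .pv n else σ₁ α)
      = (tAA P (m+1)).1.subst σ₁ := by
    refine Form.subst_congr _ (fun α hα => ?_)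
    have hv := tAA_vars P (m+1) α hα
    have : α ≠ m := by omega
    simp [this]
  cases b
  · rw [tAA_actF_fst, tAA_actF_fst]
    simp only [Form.subst, hP]
    simp only [if_true]
    exact imp_parr (imp_tens hσ₁ (imp_refl (Form.nv n)))
      (imp_refl (Form.modn a (Form.pv n)))
  · rw [tAA_actT_fst, tAA_actT_fst]
    simp only [Form.subst, hP]
    simp only [if_true]
    exact imp_parr (imp_refl (Form.modp a (Form.nv n)))
      (imp_tens hσ₁ (imp_refl (Form.pv n)))

theorem rel_redex (a ℓ ℓ' : ℕ) (P₁ Q₁ R : Proc) :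
    RelA (.par (.act true a ℓ P₁) (.par (.act false a ℓ' Q₁) R))
      (.par P₁ (.par Q₁ R)) := by
  intro m n
  set A := (tAA P₁ n).1 with hA
  set B := (tAA Q₁ (n + cnt P₁)).1 with hB
  set C := (tAA R (n + cnt P₁ + cnt Q₁)).1 with hC
  set m₁ := m + cnt P₁ + 1 with hm₁
  set σ : ℕ → Form := fun α =>
    if α = m then A.dual
    else if α < m₁ then .pv (n + (α - (m + 1)))
    else if α = m₁ then A.dual
    else if α < m₁ + cnt Q₁ + 1 then .pv (n + cnt P₁ + (α - (m₁ + 1)))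
    else .pv (n + cnt P₁ + cnt Q₁ + (α - (m₁ + cnt Q₁ + 1))) with hσ
  refine ⟨σ, ?_⟩
  have e1 : (tAA P₁ (m+1)).1.subst σ = A := by
    rw [hA]
    refine tAA_subst_eq P₁ (m+1) n σ (fun α h1 h2 => ?_)
    have h3 : α ≠ m := by omega
    have h4 : α < m₁ := by omega
    simp [hσ, h3, h4]
  have e2 : (tAA Q₁ (m₁ + 1)).1.subst σ = B := by
    rw [hB]
    refine tAA_subst_eq Q₁ (m₁ + 1) (n + cnt P₁) σ (fun α h1 h2 => ?_)
    have h3 : α ≠ m := by omega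
    have h4 : ¬ α < m₁ := by omega
    have h5 : α ≠ m₁ := by omega
    have h6 : α < m₁ + cnt Q₁ + 1 := by omega
    simp [hσ, h3, h4, h5, h6]; omega
  have e3 : (tAA R (m₁ + cnt Q₁ + 1)).1.subst σ = C := by
    rw [hC]
    refine tAA_subst_eq R (m₁ + cnt Q₁ + 1) (n + cnt P₁ + cnt Q₁) σ
      (fun α h1 h2 => ?_)
    have h3 : α ≠ m := by omega
    have h4 : ¬ α < m₁ := by omega
    have h5 : α ≠ m₁ := by omega
    have h6 : ¬ α < m₁ + cnt Q₁ + 1 := by omega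
    simp [hσ, h3, h4, h5, h6]; omega
  have hvm : σ m = A.dual := by simp [hσ]
  have hvm₁ : σ m₁ = A.dual := by
    have h3 : m₁ ≠ m := by omega
    have h4 : ¬ m₁ < m₁ := by omega
    simp [hσ, h3, h4]
  rw [tAA_par_fst, tAA_par_fst, tAA_par_fst, tAA_par_fst,
      tAA_actT_fst, tAA_actF_fst,
      show m + cnt (Proc.act true a ℓ P₁) = m₁ from by
        simp only [cnt]; omega,
      show m₁ + cnt (Proc.act false a ℓ' Q₁) = m₁ + cnt Q₁ + 1 from by
        simp only [cnt]; omega]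
  simp only [Form.subst]
  rw [e1, e2, e3, hvm, hvm₁]
  simp only [Form.dual_dual]
  exact redex_mll a A B C

theorem sc_rel {P Q : Proc} (h : SC P Q) : RelA P Q ∧ RelA Q P := by
  induction h with
  | refl P => exact ⟨rel_refl P, rel_refl P⟩
  | symm _ ih => exact ⟨ih.2, ih.1⟩
  | trans _ _ ih1 ih2 =>
    exact ⟨rel_trans ih1.1 ih2.1, rel_trans ih2.2 ih1.2⟩
  | parComm P Q => exact ⟨rel_parComm P Q, rel_parComm Q P⟩
  | parAssoc P Q R => exact ⟨rel_parAssoc1 P Q R, rel_parAssoc2 P Q R⟩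
  | parUnit P => exact ⟨rel_parUnit1 P, rel_parUnit2 P⟩
  | parCong _ _ ih1 ih2 =>
    exact ⟨rel_parCong ih1.1 ih2.1, rel_parCong ih1.2 ih2.2⟩
  | actCong b a ℓ _ ih =>
    exact ⟨rel_actCong b a ℓ ℓ ih.1, rel_actCong b a ℓ ℓ ih.2⟩

/-- each execution step `P → Q` yields a pure-MLL proof of
`⌈P⌉ₐ ⊸ ⌈Q⌉ₐ` for some instantiation of the variables of `⌈P⌉ₐ`. -/
theorem step_async_implication (P Q : Proc) (p : ℕ × ℕ) (h : Step P p Q) :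
    AImp P Q := by
  obtain ⟨a, P₁, Q₁, R, hP, hQ⟩ := h
  have r1 : RelA P (.par (.act true a p.1 P₁) (.par (.act false a p.2 Q₁) R)) :=
    (sc_rel hP).1
  have r2 : RelA (.par (.act true a p.1 P₁) (.par (.act false a p.2 Q₁) R))
      (.par P₁ (.par Q₁ R)) := rel_redex a p.1 p.2 P₁ Q₁ R
  have r3 : RelA (.par P₁ (.par Q₁ R)) Q := (sc_rel hQ).2
  obtain ⟨σ, hσ⟩ := (rel_trans (rel_trans r1 r2) r3) 0 (tAA P 0).2
  exact ⟨σ, Prov.parr hσ⟩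
end
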